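/- arXiv:math/0203226 — 4 statements merged into one kernel-verified Lean document; each statement's English description precedes it below -/
import Mathlib

section
/- Fix n ≥ 1 and let π be a permutation of {1,…,n}. Then π avoids both 132 and 213 if and only if there exist a positive integer m and integers n+1 = r_0 > r_1 > ⋯ > r_m = 1 such that, in one-line notation, π is the concatenation of the increasing blocks r_1, r_1+1, …, r_0−1, then r_2, r_2+1, …, r_1−1, …, and finally r_m, r_m+1, …, r_{m−1}−1. -/
/-- `π` contains `σ` as a pattern: there is a subsequence of `π` (in one-line notation)
whose entries are in the same relative order as those of `σ`. -/
def PContains {n k : ℕ} (π : Equiv.Perm (Fin n)) (σ : Equiv.Perm (Fin k)) : Prop :=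
  ∃ f : Fin k → Fin n, StrictMono f ∧ ∀ s t : Fin k, π (f s) < π (f t) ↔ σ s < σ t

/-- `π` avoids the pattern `σ`. -/
def PAvoids {n k : ℕ} (π : Equiv.Perm (Fin n)) (σ : Equiv.Perm (Fin k)) : Prop :=
  ¬ PContains π σ

/-- The pattern 132 (one-line notation `1,3,2`, zero-indexed `0,2,1`). -/
noncomputable def p132 : Equiv.Perm (Fin 3) := Equiv.ofBijective ![0, 2, 1] (by decide)

/-- The pattern 213 (one-line notation `2,1,3`, zero-indexed `1,0,2`). -/
noncomputable def p213 : Equiv.Perm (Fin 3) := Equiv.ofBijective ![1, 0, 2] (by decide)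

section Aux
variable {n : ℕ}

/-- The key arithmetic property: every ascent spans consecutive values/positions. -/
private def Pp (π : Equiv.Perm (Fin n)) : Prop :=
  ∀ i j : Fin n, i < j → π i < π j → (π j : ℕ) + (i : ℕ) = (π i : ℕ) + (j : ℕ)

private lemma strictMono3 {a b c : Fin n} (hab : a < b) (hbc : b < c) :
    StrictMono ![a, b, c] := by
  intro s t hst
  fin_cases s <;> fin_cases t <;> simp_all <;>
    first
      | exact hab | exact hbc | exact hab.trans hbc

private lemma mk132 (π : Equiv.Perm (Fin n)) {a b c : Fin n} (hab : a < b) (hbc : b < c)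
    (h1 : π a < π c) (h2 : π c < π b) : PContains π p132 := by
  refine ⟨![a, b, c], strictMono3 hab hbc, ?_⟩
  intro s t
  fin_cases s <;> fin_cases t <;> simp [p132, Equiv.ofBijective] <;> omega

private lemma mk213 (π : Equiv.Perm (Fin n)) {a b c : Fin n} (hab : a < b) (hbc : b < c)
    (h1 : π b < π a) (h2 : π a < π c) : PContains π p213 := by
  refine ⟨![a, b, c], strictMono3 hab hbc, ?_⟩
  intro s t
  fin_cases s <;> fin_cases t <;> simp [p213, Equiv.ofBijective] <;> omega

private lemma P_avoids (π : Equiv.Perm (Fin n)) (hP : Pp π) :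
    PAvoids π p132 ∧ PAvoids π p213 := by
  constructor
  · rintro ⟨f, hf, hiff⟩
    have h01 : π (f 0) < π (f 1) := (hiff 0 1).mpr (by decide)
    have h02 : π (f 0) < π (f 2) := (hiff 0 2).mpr (by decide)
    have h21 : π (f 2) < π (f 1) := (hiff 2 1).mpr (by decide)
    have e1 := hP (f 0) (f 1) (hf (by decide)) h01
    have e2 := hP (f 0) (f 2) (hf (by decide)) h02
    have hm : f 1 < f 2 := hf (by decide)
    omega
  · rintro ⟨f, hf, hiff⟩
    have h10 : π (f 1) < π (f 0) := (hiff 1 0).mpr (by decide)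
    have h02 : π (f 0) < π (f 2) := (hiff 0 2).mpr (by decide)
    have h12 : π (f 1) < π (f 2) := (hiff 1 2).mpr (by decide)
    have e1 := hP (f 0) (f 2) ((hf (by decide : (0:Fin 3) < 1)).trans (hf (by decide))) h02
    have e2 := hP (f 1) (f 2) (hf (by decide)) h12
    have hm : f 0 < f 1 := hf (by decide)
    omega

private lemma adj (π : Equiv.Perm (Fin n)) (h1 : PAvoids π p132) (h2 : PAvoids π p213)
    {i j : Fin n} (hij : i < j) (hv : (π j : ℕ) = (π i : ℕ) + 1) : (j : ℕ) = (i : ℕ) + 1 := by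
  by_contra hne
  have hq : (i : ℕ) + 1 < n := lt_of_le_of_lt (Nat.succ_le_of_lt hij) j.isLt
  set q : Fin n := ⟨(i : ℕ) + 1, hq⟩ with hqdef
  have hqval : (q : ℕ) = (i : ℕ) + 1 := rfl
  have hiq : i < q := by omega
  have hqj : q < j := by
    have : (i : ℕ) < j := hij
    omega
  have hπij : π i < π j := by omega
  have hqi : π q ≠ π i := fun h => by have := π.injective h; omega
  have hqj' : π q ≠ π j := fun h => by have := π.injective h; omega
  have hqiv : (π q : ℕ) ≠ (π i : ℕ) := fun h => hqi (Fin.ext h)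
  have hqjv : (π q : ℕ) ≠ (π j : ℕ) := fun h => hqj' (Fin.ext h)
  rcases lt_trichotomy ((π q : ℕ)) ((π i : ℕ)) with h | h | h
  · exact h2 (mk213 π hiq hqj (by omega) hπij)
  · exact hqiv h
  · exact h1 (mk132 π hiq hqj hπij (by omega))

private lemma avoids_P (π : Equiv.Perm (Fin n)) (h1 : PAvoids π p132) (h2 : PAvoids π p213) :
    Pp π := by
  suffices H : ∀ d : ℕ, ∀ i j : Fin n, i < j → π i < π j → (π j : ℕ) = (π i : ℕ) + (d + 1) →
      (j : ℕ) = (i : ℕ) + (d + 1) by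
    intro i j hij hπ
    have hπ' : (π i : ℕ) < (π j : ℕ) := hπ
    obtain ⟨d, hd⟩ : ∃ d, (π j : ℕ) = (π i : ℕ) + (d + 1) :=
      ⟨(π j : ℕ) - (π i : ℕ) - 1, by omega⟩
    have := H d i j hij hπ hd
    omega
  intro d
  induction d with
  | zero => intro i j hij hπ hv; exact adj π h1 h2 hij hv
  | succ d ih =>
    intro i j hij hπ hv
    have hijv : (i : ℕ) < j := hij
    have hlt : (π i : ℕ) + 1 < n := by have := (π j).isLt; omega
    obtain ⟨k, hkv⟩ : ∃ k : Fin n, (π k : ℕ) = (π i : ℕ) + 1 :=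
      ⟨π.symm ⟨(π i : ℕ) + 1, hlt⟩, by rw [π.apply_symm_apply]⟩
    have hki : (k : ℕ) ≠ (i : ℕ) := by
      intro h; rw [Fin.ext h] at hkv; omega
    have hkjv : (k : ℕ) ≠ (j : ℕ) := by
      intro h; rw [Fin.ext h] at hkv; omega
    have hik : (i : ℕ) < k := by
      rcases lt_trichotomy ((k : ℕ)) ((i : ℕ)) with h | h | h
      · exact absurd (mk213 π (show k < i by omega) hij (by omega) (by omega)) h2
      · exact absurd h hki
      · exact h
    have hkj : (k : ℕ) < j := by
      rcases lt_trichotomy ((k : ℕ)) ((j : ℕ)) with h | h | h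
      · exact h
      · exact absurd h hkjv
      · exact absurd (mk132 π hij (show j < k by omega) (by omega) (by omega)) h1
    have e1 : (k : ℕ) = (i : ℕ) + 1 := adj π h1 h2 (show i < k by omega) hkv
    have e2 : (j : ℕ) = (k : ℕ) + (d + 1) :=
      ih k j (by omega) (by omega) (by omega)
    omega

/-- Invariant: positions from `p` on carry exactly the values below `n - p`. -/
private def InvP (π : Equiv.Perm (Fin n)) (p : ℕ) : Prop :=
  ∀ k : Fin n, p ≤ (k : ℕ) ↔ (π k : ℕ) < n - p

private lemma block_run (π : Equiv.Perm (Fin n)) (hP : Pp π) {p : ℕ} (hp : p < n)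
    (hI : InvP π p) :
    ∀ k : Fin n, p ≤ (k : ℕ) → (k : ℕ) < n - (π ⟨p, hp⟩ : ℕ) →
      (π k : ℕ) = (π ⟨p, hp⟩ : ℕ) + ((k : ℕ) - p) := by
  intro k hk1 hk2
  have hpv : ((⟨p, hp⟩ : Fin n) : ℕ) = p := rfl
  have hv : (π ⟨p, hp⟩ : ℕ) < n - p := (hI ⟨p, hp⟩).mp (le_of_eq hpv.symm)
  rcases eq_or_lt_of_le hk1 with he | hlt
  · have hkp : k = ⟨p, hp⟩ := Fin.ext he.symm
    rw [hkp]; omega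
  · have hw : (π ⟨p, hp⟩ : ℕ) + ((k : ℕ) - p) < n := by omega
    obtain ⟨q, hqv⟩ : ∃ q : Fin n, (π q : ℕ) = (π ⟨p, hp⟩ : ℕ) + ((k : ℕ) - p) :=
      ⟨π.symm ⟨_, hw⟩, by rw [π.apply_symm_apply]⟩
    have hqp : p ≤ (q : ℕ) := (hI q).mpr (by omega)
    have hqne : (q : ℕ) ≠ p := by
      intro h
      have : q = ⟨p, hp⟩ := Fin.ext h
      rw [this] at hqv; omega
    have := hP ⟨p, hp⟩ q (by omega) (by omega)
    have hqk : q = k := Fin.ext (by omega)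
    rw [← hqk]; omega

private lemma inv_step (π : Equiv.Perm (Fin n)) (hP : Pp π) {p : ℕ} (hp : p < n)
    (hI : InvP π p) : InvP π (n - (π ⟨p, hp⟩ : ℕ)) := by
  intro k
  have hpv : ((⟨p, hp⟩ : Fin n) : ℕ) = p := rfl
  have hv : (π ⟨p, hp⟩ : ℕ) < n - p := (hI ⟨p, hp⟩).mp (le_of_eq hpv.symm)
  have hknp : (k : ℕ) < n := k.isLt
  constructor
  · intro hk
    by_contra hge
    push_neg at hge
    have hk2 : p ≤ (k : ℕ) := by omega
    have hπk : (π k : ℕ) < n - p := (hI k).mp hk2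
    have hwpos : p + ((π k : ℕ) - (π ⟨p, hp⟩ : ℕ)) < n := by omega
    have hk'v : ((⟨p + ((π k : ℕ) - (π ⟨p, hp⟩ : ℕ)), hwpos⟩ : Fin n) : ℕ)
        = p + ((π k : ℕ) - (π ⟨p, hp⟩ : ℕ)) := rfl
    have hrun := block_run π hP hp hI ⟨p + ((π k : ℕ) - (π ⟨p, hp⟩ : ℕ)), hwpos⟩
      (by omega) (by omega)
    have hkk : (⟨p + ((π k : ℕ) - (π ⟨p, hp⟩ : ℕ)), hwpos⟩ : Fin n) = k :=
      π.injective (Fin.ext (by omega))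
    have := congrArg Fin.val hkk
    omega
  · intro hk
    by_contra h
    push_neg at h
    rcases lt_or_ge (k : ℕ) p with h2 | h2
    · have hnk : ¬ ((π k : ℕ) < n - p) := fun hc => by
        have := (hI k).mpr hc; omega
      omega
    · have := block_run π hP hp hI k h2 (by omega)
      omega

end Aux

/-- A permutation `π` of `{1,…,n}` (with `n ≥ 1`) avoids both 132 and 213 if and only if
there are `m ≥ 1` and `n+1 = r_0 > r_1 > ⋯ > r_m = 1` such that `π` consists of the
consecutive increasing blocks `r_1, …, r_0 - 1`, then `r_2, …, r_1 - 1`, …, and finally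
`r_m, …, r_{m-1} - 1`.  (Positions and values are zero-indexed here: position `i` lies in
the `(j+1)`-st block when `n + 1 - r j ≤ i < n + 1 - r (j+1)`, and the one-line value
there is `π i + 1 = r (j+1) + (i - (n + 1 - r j))`.) -/
theorem statement1 (n : ℕ) (hn : 1 ≤ n) (π : Equiv.Perm (Fin n)) :
    (PAvoids π p132 ∧ PAvoids π p213) ↔
      ∃ m : ℕ, 1 ≤ m ∧ ∃ r : ℕ → ℕ, r 0 = n + 1 ∧ r m = 1 ∧
        (∀ j < m, r (j + 1) < r j) ∧
        (∀ j < m, ∀ i : Fin n, n + 1 - r j ≤ (i : ℕ) → (i : ℕ) < n + 1 - r (j + 1) →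
          (π i : ℕ) + 1 = r (j + 1) + ((i : ℕ) - (n + 1 - r j))) := by
  constructor
  · rintro ⟨h1, h2⟩
    have hP := avoids_P π h1 h2
    set f : ℕ → ℕ := fun j =>
      Nat.rec 0 (fun _ p => if h : p < n then n - (π ⟨p, h⟩ : ℕ) else n) j with hfdef
    have hf0 : f 0 = 0 := rfl
    have hfs : ∀ j, f (j + 1) = if h : f j < n then n - (π ⟨f j, h⟩ : ℕ) else n :=
      fun j => rfl
    have key : ∀ j, f j ≤ n ∧ InvP π (f j) := by
      intro j
      induction j with
      | zero =>
        refine ⟨Nat.zero_le n, fun k => ?_⟩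
        rw [hf0]
        exact ⟨fun _ => by have := k.isLt; omega, fun _ => Nat.zero_le _⟩
      | succ j ih =>
        rw [hfs]
        by_cases h : f j < n
        · rw [dif_pos h]
          exact ⟨Nat.sub_le _ _, inv_step π hP h ih.2⟩
        · rw [dif_neg h]
          refine ⟨le_refl n, fun k => ?_⟩
          exact ⟨fun hk => absurd hk (by have := k.isLt; omega),
                 fun hk => absurd hk (by omega)⟩
    have grow : ∀ j, f j < n → f j < f (j + 1) := by
      intro j h
      rw [hfs, dif_pos h]
      have := ((key j).2 ⟨f j, h⟩).mp (le_of_eq rfl)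
      omega
    have reach : ∀ j, j ≤ f j ∨ f j = n := by
      intro j
      induction j with
      | zero => left; exact le_refl 0
      | succ j ih =>
        by_cases h : f j < n
        · rcases ih with h' | h'
          · left; have := grow j h; omega
          · omega
        · right
          have hfn : f j = n := by have := (key j).1; omega
          rw [hfs, hfn, dif_neg (lt_irrefl n)]
    have hex : ∃ j, f j = n := by
      refine ⟨n, ?_⟩
      rcases reach n with h | h
      · exact le_antisymm (key n).1 h
      · exact h
    have hm : f (Nat.find hex) = n := Nat.find_spec hex
    have hmpos : 1 ≤ Nat.find hex := by
      rcases Nat.eq_zero_or_pos (Nat.find hex) with h0 | h0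
      · rw [h0, hf0] at hm; omega
      · exact h0
    refine ⟨Nat.find hex, hmpos, fun j => n + 1 - f j,
      (by show n + 1 - f 0 = n + 1; rw [hf0]; omega),
      (by show n + 1 - f (Nat.find hex) = 1; rw [hm]; omega), ?_, ?_⟩
    · intro j hj
      show n + 1 - f (j + 1) < n + 1 - f j
      have hfj : f j < n :=
        lt_of_le_of_ne (key j).1 (Nat.find_min hex hj)
      have hg := grow j hfj
      have := (key (j + 1)).1
      omega
    · intro j hj i hi1 hi2
      have hfj : f j < n :=
        lt_of_le_of_ne (key j).1 (Nat.find_min hex hj)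
      have hfj1 : f (j + 1) = n - (π ⟨f j, hfj⟩ : ℕ) := by rw [hfs, dif_pos hfj]
      have hfle := (key j).1
      have hfle1 := (key (j + 1)).1
      have hv : (π ⟨f j, hfj⟩ : ℕ) < n - f j :=
        ((key j).2 ⟨f j, hfj⟩).mp (le_of_eq rfl)
      have hi1'' : n + 1 - (n + 1 - f j) ≤ (i : ℕ) := hi1
      have hi2'' : (i : ℕ) < n + 1 - (n + 1 - f (j + 1)) := hi2
      have hi1' : f j ≤ (i : ℕ) := by omega
      have hi2' : (i : ℕ) < n - (π ⟨f j, hfj⟩ : ℕ) := by omega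
      have hrun := block_run π hP hfj (key j).2 i hi1' hi2'
      show (π i : ℕ) + 1 = (n + 1 - f (j + 1)) + ((i : ℕ) - (n + 1 - (n + 1 - f j)))
      omega
  · rintro ⟨m, hm1, r, hr0, hrm, hdec, hval⟩
    apply P_avoids π
    have mono : ∀ a b, a ≤ b → b ≤ m → r b ≤ r a := by
      intro a b hab hbm
      induction b with
      | zero => have : a = 0 := by omega
                rw [this]
      | succ b ih =>
        rcases Nat.lt_or_ge a (b + 1) with h | h
        · have h1 := ih (by omega) (by omega)
          have h2 := hdec b (by omega)
          omega
        · have : a = b + 1 := by omega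
          rw [this]
    have rle : ∀ b, b ≤ m → r b ≤ n + 1 := by
      intro b hb
      have := mono 0 b (Nat.zero_le _) hb
      omega
    have blocks : ∀ i : Fin n, ∃ a, a < m ∧ n + 1 - r a ≤ (i : ℕ) ∧
        (i : ℕ) < n + 1 - r (a + 1) := by
      intro i
      have hP0 : n + 1 - r 0 ≤ (i : ℕ) := by rw [hr0]; omega
      have ham : Nat.findGreatest (fun a => n + 1 - r a ≤ (i : ℕ)) m ≤ m :=
        Nat.findGreatest_le m
      have haspec : n + 1 - r (Nat.findGreatest (fun a => n + 1 - r a ≤ (i : ℕ)) m) ≤ (i : ℕ) :=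
        Nat.findGreatest_spec (P := fun a => n + 1 - r a ≤ (i : ℕ)) (Nat.zero_le m) hP0
      have ham' : Nat.findGreatest (fun a => n + 1 - r a ≤ (i : ℕ)) m < m := by
        rcases lt_or_eq_of_le ham with h | h
        · exact h
        · exfalso
          rw [h, hrm] at haspec
          have := i.isLt
          omega
      have hnot : ¬ (n + 1 - r (Nat.findGreatest (fun a => n + 1 - r a ≤ (i : ℕ)) m + 1)
          ≤ (i : ℕ)) :=
        Nat.findGreatest_is_greatest (P := fun a => n + 1 - r a ≤ (i : ℕ))
          (Nat.lt_succ_self _) (by omega)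
      exact ⟨_, ham', haspec, by omega⟩
    intro i j hij hπ
    obtain ⟨a, ham, hia1, hia2⟩ := blocks i
    obtain ⟨b, hbm, hjb1, hjb2⟩ := blocks j
    have ei := hval a ham i hia1 hia2
    have ej := hval b hbm j hjb1 hjb2
    have hijv : (i : ℕ) < j := hij
    have hπv : (π i : ℕ) < π j := hπ
    have hra := rle a (by omega)
    have hrb := rle b (by omega)
    have hra1 := rle (a + 1) (by omega)
    have hrb1 := rle (b + 1) (by omega)
    rcases lt_trichotomy a b with h | h | h
    · have h1 : r b ≤ r (a + 1) := mono (a + 1) b (by omega) (by omega)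
      have h2 := hdec b hbm
      omega
    · rw [h] at ei hia1 hia2
      omega
    · have h1 : r a ≤ r (b + 1) := mono (b + 1) a (by omega) (by omega)
      omega
end

section
/- For all integers k ≥ 2 and all n ≥ 0, the number of permutations of {1,…,n} avoiding all three patterns 12⋯k (the identity permutation of {1,…,k}), 132, and 213 equals the (k−1)-generalized Fibonacci number F_{k−1,n+1}. -/
/-- The k-generalized Fibonacci numbers: `genFib k n = F_{k,n}`, with
`F_{k,n} = 0` for `n ≤ 0`, `F_{k,1} = 1`, and `F_{k,n} = ∑_{i=1}^k F_{k,n-i}` for `n ≥ 2`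
(terms with nonpositive index being `0`). -/
def genFib (k : ℕ) : ℕ → ℕ
  | 0 => 0
  | 1 => 1
  | n + 2 => ∑ i ∈ Finset.range k, genFib k (n + 1 - i)
decreasing_by omega

namespace St2


/-- The function (one-line notation) of the skew sum of increasing blocks with sizes `l`. -/
def permFun : List ℕ → ℕ → ℕ
  | [], _ => 0
  | b :: r, p => if p < b then r.sum + p else permFun r (p - b)

/-- Compositions of `n` with parts in `[1, K]`. -/
def compSet (K : ℕ) : ℕ → Finset (List ℕ)
  | 0 => {[]}
  | n + 1 => (Finset.range K).biUnion fun i =>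
      if i ≤ n then (compSet K (n - i)).image (List.cons (i + 1)) else ∅
decreasing_by omega

/-- Goodness of a function `g` viewed as a permutation of `[0,n)`:
bijective, skew sum of increasing runs, no run of length `K+1`. -/
structure GFun (n K : ℕ) (g : ℕ → ℕ) : Prop where
  maps : ∀ p, p < n → g p < n
  surj : ∀ v, v < n → ∃ p, p < n ∧ g p = v
  ord : ∀ p q, p < q → q < n → g q < g p ∨ g q = g p + (q - p)
  norun : ∀ i, i + K < n → g (i + K) ≠ g i + K

lemma GFun.inj {n K g} (h : GFun n K g) {p q : ℕ} (hp : p < n) (hq : q < n)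
    (he : g p = g q) : p = q := by
  rcases lt_trichotomy p q with hlt | rfl | hlt
  · rcases h.ord p q hlt hq with h' | h' <;> omega
  · rfl
  · rcases h.ord q p hlt hp with h' | h' <;> omega

lemma gfun_congr {n K g g'} (hgg : ∀ p, p < n → g p = g' p) (h : GFun n K g) :
    GFun n K g' := by
  refine ⟨?_, ?_, ?_, ?_⟩
  · intro p hp; rw [← hgg p hp]; exact h.maps p hp
  · intro v hv; obtain ⟨p, hp, he⟩ := h.surj v hv; exact ⟨p, hp, by rw [← hgg p hp]; exact he⟩
  · intro p q hpq hq
    rw [← hgg p (lt_trans hpq hq), ← hgg q hq]; exact h.ord p q hpq hq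
  · intro i hi
    rw [← hgg i (by omega), ← hgg (i+K) hi]; exact h.norun i hi

lemma runFill {n : ℕ} {g : ℕ → ℕ}
    (hord : ∀ p q, p < q → q < n → g q < g p ∨ g q = g p + (q - p))
    {p d : ℕ} (hd : p + d < n) (hrun : g (p + d) = g p + d) :
    ∀ e ≤ d, g (p + e) = g p + e := by
  intro e he
  rcases eq_or_lt_of_le he with rfl | helt
  · exact hrun
  rcases Nat.eq_zero_or_pos e with rfl | hepos
  · simp
  rcases hord p (p + e) (by omega) (by omega) with h1 | h1
  · rcases hord (p + e) (p + d) (by omega) hd with h2 | h2 <;> omega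
  · omega

lemma permFun_lt : ∀ (l : List ℕ) (p : ℕ), p < l.sum → permFun l p < l.sum
  | [], p, h => by simp at h
  | b :: r, p, h => by
    simp only [permFun, List.sum_cons] at h ⊢
    by_cases hp : p < b
    · simp only [if_pos hp]; omega
    · simp only [if_neg hp]
      have := permFun_lt r (p - b) (by omega)
      omega

lemma gfun_of_comp {K : ℕ} : ∀ (l : List ℕ), (∀ x ∈ l, 1 ≤ x ∧ x ≤ K) →
    GFun l.sum K (permFun l)
  | [], _ => ⟨by simp, by simp, by simp, by simp⟩
  | b :: r, hparts => by
    have hb : 1 ≤ b ∧ b ≤ K := hparts b (by simp)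
    have ih : GFun r.sum K (permFun r) :=
      gfun_of_comp r (fun x hx => hparts x (by simp [hx]))
    set m := r.sum with hm
    have hsum : (b :: r).sum = b + m := by simp [hm]
    rw [hsum]
    refine ⟨?_, ?_, ?_, ?_⟩
    · intro p hp
      simp only [permFun]
      by_cases hpb : p < b
      · simp only [if_pos hpb]; omega
      · simp only [if_neg hpb]
        have := ih.maps (p - b) (by omega)
        omega
    · intro v hv
      by_cases hvm : v < m
      · obtain ⟨q, hq, he⟩ := ih.surj v hvm
        refine ⟨q + b, by omega, ?_⟩
        simp only [permFun, if_neg (by omega : ¬ q + b < b)]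
        simpa using he
      · refine ⟨v - m, by omega, ?_⟩
        simp only [permFun, if_pos (by omega : v - m < b)]
        omega
    · intro p q hpq hq
      simp only [permFun]
      by_cases hqb : q < b
      · simp only [if_pos hqb, if_pos (by omega : p < b)]
        right; omega
      · simp only [if_neg hqb]
        by_cases hpb : p < b
        · simp only [if_pos hpb]
          left
          have := ih.maps (q - b) (by omega)
          omega
        · simp only [if_neg hpb]
          rcases ih.ord (p - b) (q - b) (by omega) (by omega) with h | h
          · left; exact h
          · right; omega
    · intro i hi
      simp only [permFun]
      by_cases hib : i < b
      · simp only [if_neg (by omega : ¬ i + K < b), if_pos hib]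
        have := ih.maps (i + K - b) (by omega)
        omega
      · simp only [if_neg hib, if_neg (by omega : ¬ i + K < b)]
        have := ih.norun (i - b) (by omega)
        have he : i + K - b = i - b + K := by omega
        rw [he]; exact this

lemma mem_compSet (K : ℕ) : ∀ (n : ℕ) (l : List ℕ),
    l ∈ compSet K n ↔ (l.sum = n ∧ ∀ x ∈ l, 1 ≤ x ∧ x ≤ K) := by
  intro n
  induction n using Nat.strong_induction_on with
  | _ n ih =>
    match n with
    | 0 =>
      intro l
      simp only [compSet, Finset.mem_singleton]
      constructor
      · rintro rfl; simp
      · rintro ⟨hsum, hparts⟩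
        cases l with
        | nil => rfl
        | cons b r =>
          have := hparts b (by simp)
          simp [List.sum_cons] at hsum
          omega
    | n + 1 =>
      intro l
      simp only [compSet, Finset.mem_biUnion, Finset.mem_range]
      constructor
      · rintro ⟨i, hiK, hmem⟩
        by_cases hin : i ≤ n
        · rw [if_pos hin] at hmem
          simp only [Finset.mem_image] at hmem
          obtain ⟨r, hr, rfl⟩ := hmem
          obtain ⟨hrsum, hrparts⟩ := (ih (n - i) (by omega) r).mp hr
          refine ⟨by simp [hrsum]; omega, ?_⟩
          intro x hx
          rcases List.mem_cons.mp hx with rfl | hx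
          · omega
          · exact hrparts x hx
        · rw [if_neg hin] at hmem; simp at hmem
      · rintro ⟨hsum, hparts⟩
        cases l with
        | nil => simp at hsum
        | cons b r =>
          have hb := hparts b (by simp)
          simp only [List.sum_cons] at hsum
          refine ⟨b - 1, by omega, ?_⟩
          rw [if_pos (by omega)]
          simp only [Finset.mem_image]
          refine ⟨r, ?_, by congr 1; omega⟩
          rw [ih (n - (b - 1)) (by omega) r]
          exact ⟨by omega, fun x hx => hparts x (by simp [hx])⟩

lemma card_compSet (K : ℕ) : ∀ n, (compSet K n).card = genFib K (n + 1) := by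
  intro n
  induction n using Nat.strong_induction_on with
  | _ n ih =>
    match n with
    | 0 => rw [genFib]; simp [compSet]
    | n + 1 =>
      rw [genFib]
      rw [compSet, Finset.card_biUnion]
      · refine Finset.sum_congr rfl ?_
        intro i hi
        simp only [Finset.mem_range] at hi
        by_cases hin : i ≤ n
        · rw [if_pos hin, Finset.card_image_of_injective _ (List.cons_injective),
            ih (n - i) (by omega)]
          congr 1
          omega
        · rw [if_neg hin]
          have : n + 1 - i = 0 := by omega
          rw [this, genFib]
          simp
      · intro a _ b _ hab
        simp only [Finset.disjoint_left]
        intro l hla hlb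
        by_cases han : a ≤ n
        · rw [if_pos han] at hla
          simp only [Finset.mem_image] at hla
          obtain ⟨r, _, rfl⟩ := hla
          by_cases hbn : b ≤ n
          · rw [if_pos hbn] at hlb
            simp only [Finset.mem_image] at hlb
            obtain ⟨r', _, he⟩ := hlb
            injection he with h1 _
            exact hab (by omega)
          · rw [if_neg hbn] at hlb; simp at hlb
        · rw [if_neg han] at hla; simp at hla


lemma comp_ext : ∀ (n : ℕ) (l l' : List ℕ), l.sum = n → l'.sum = n →
    (∀ x ∈ l, 1 ≤ x) → (∀ x ∈ l', 1 ≤ x) →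
    (∀ p, p < n → permFun l p = permFun l' p) → l = l' := by
  intro n
  induction n using Nat.strong_induction_on with
  | _ n ih =>
    intro l l' hs hs' hp hp' hagree
    match n with
    | 0 =>
      cases l with
      | nil =>
        cases l' with
        | nil => rfl
        | cons b r => have := hp' b (by simp); simp [List.sum_cons] at hs'; omega
      | cons b r => have := hp b (by simp); simp [List.sum_cons] at hs; omega
    | n + 1 =>
      cases l with
      | nil => simp at hs
      | cons b r =>
        cases l' with
        | nil => simp at hs'
        | cons b' r' =>
          have hb : 1 ≤ b := (hp b (by simp))
          have hb' : 1 ≤ b' := (hp' b' (by simp))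
          simp only [List.sum_cons] at hs hs'
          have h0 := hagree 0 (by omega)
          simp only [permFun, if_pos (by omega : (0:ℕ) < b),
            if_pos (by omega : (0:ℕ) < b')] at h0
          have hbb : b = b' := by omega
          subst hbb
          have hrr : r = r' := by
            refine ih r.sum (by omega) r r' rfl (by omega)
              (fun x hx => hp x (by simp [hx])) (fun x hx => hp' x (by simp [hx])) ?_
            intro p hpn
            have := hagree (p + b) (by omega)
            simpa only [permFun, if_neg (by omega : ¬ p + b < b),
              Nat.add_sub_cancel] using this
          rw [hrr]

lemma exists_comp {K : ℕ} (hK : 1 ≤ K) : ∀ (n : ℕ) (g : ℕ → ℕ), GFun n K g →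
    ∃ l, (l.sum = n ∧ ∀ x ∈ l, 1 ≤ x ∧ x ≤ K) ∧ ∀ p, p < n → permFun l p = g p := by
  intro n
  induction n using Nat.strong_induction_on with
  | _ n ih =>
    intro g hg
    match n with
    | 0 => exact ⟨[], ⟨rfl, by simp⟩, by omega⟩
    | n + 1 =>
      classical
      have hex : ∃ j, 0 < j ∧ (n + 1 ≤ j ∨ g j ≠ g 0 + j) := ⟨n + 1, by omega, Or.inl le_rfl⟩
      set b := Nat.find hex with hbdef
      have hbspec := Nat.find_spec hex
      have hbmin : ∀ j, j < b → ¬ (0 < j ∧ (n + 1 ≤ j ∨ g j ≠ g 0 + j)) :=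
        fun j hj => Nat.find_min hex hj
      have hble : b ≤ n + 1 := Nat.find_le ⟨by omega, Or.inl le_rfl⟩
      have hbpos : 0 < b := hbspec.1
      have hrun : ∀ j, j < b → g j = g 0 + j := by
        intro j hj
        rcases Nat.eq_zero_or_pos j with rfl | hjpos
        · omega
        · have := hbmin j hj
          push_neg at this
          exact (this hjpos).2
      have hbelow : ∀ j, b ≤ j → j < n + 1 → g j < g 0 := by
        intro j hbj hj
        have hbn : b < n + 1 := by omega
        have hgb : g b ≠ g 0 + b := by
          rcases hbspec.2 with h | h
          · omega
          · exact h
        rcases hg.ord 0 j (by omega) hj with h | h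
        · omega
        · exfalso
          apply hgb
          have := runFill hg.ord (p := 0) (d := j) (by omega) (by simpa using h) b (by omega)
          simpa using this
      have hg0 : g 0 + b = n + 1 := by
        have h1 : g (b - 1) = g 0 + (b - 1) := hrun (b - 1) (by omega)
        have h2 : g (b - 1) < n + 1 := hg.maps (b - 1) (by omega)
        obtain ⟨p, hp, hgp⟩ := hg.surj n (by omega)
        have hg0lt : g 0 < n + 1 := hg.maps 0 (by omega)
        have hpb : p < b := by
          by_contra hc
          have := hbelow p (by omega) hp
          omega
        have := hrun p hpb
        omega
      have hbK : b ≤ K := by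
        by_contra hc
        have hKn : K < n + 1 := by omega
        have := hrun K (by omega)
        exact hg.norun 0 (by omega) (by simpa using this)
      -- the tail
      set m := n + 1 - b with hmdef
      have hg' : GFun m K (fun p => g (p + b)) := by
        refine ⟨?_, ?_, ?_, ?_⟩
        · intro p hp
          have := hbelow (p + b) (by omega) (by omega)
          omega
        · intro v hv
          obtain ⟨p, hp, hgp⟩ := hg.surj v (by omega)
          have hpb : b ≤ p := by
            by_contra hc
            have := hrun p (by omega)
            omega
          exact ⟨p - b, by omega, by rw [Nat.sub_add_cancel hpb]; exact hgp⟩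
        · intro p q hpq hq
          have := hg.ord (p + b) (q + b) (by omega) (by omega)
          rcases this with h | h
          · left; exact h
          · right; omega
        · intro i hi
          have := hg.norun (i + b) (by omega)
          intro hc
          apply this
          have he : i + b + K = i + K + b := by omega
          rw [he]
          exact hc
      obtain ⟨l', ⟨hl'sum, hl'parts⟩, hl'val⟩ := ih m (by omega) _ hg'
      refine ⟨b :: l', ⟨by simp [List.sum_cons]; omega, ?_⟩, ?_⟩
      · intro x hx
        rcases List.mem_cons.mp hx with rfl | hx
        · omega
        · exact hl'parts x hx
      · intro p hp
        simp only [permFun]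
        by_cases hpb : p < b
        · rw [if_pos hpb, hl'sum, hrun p hpb]
          omega
        · rw [if_neg hpb, hl'val (p - b) (by omega)]
          congr 1
          omega



variable {n : ℕ} (π : Equiv.Perm (Fin n))

/-- `π` as a function `ℕ → ℕ`. -/
def gOf : ℕ → ℕ := fun p => if h : p < n then ((π ⟨p, h⟩ : Fin n) : ℕ) else 0

lemma gOf_val (p : Fin n) : gOf π p.val = π p := by
  simp [gOf, p.isLt, Fin.eta]

lemma gOf_lt {p : ℕ} (hp : p < n) : gOf π p < n := by
  simp only [gOf, dif_pos hp]
  exact (π ⟨p, hp⟩).isLt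

lemma gOf_inj {p q : ℕ} (hp : p < n) (hq : q < n) (h : gOf π p = gOf π q) : p = q := by
  simp only [gOf, dif_pos hp, dif_pos hq] at h
  exact congrArg Fin.val (π.injective (Fin.ext h))

lemma gOf_surj {v : ℕ} (hv : v < n) : ∃ p, p < n ∧ gOf π p = v := by
  refine ⟨(π.symm ⟨v, hv⟩ : Fin n).val, (π.symm ⟨v, hv⟩).isLt, ?_⟩
  rw [gOf_val]
  simp

def Pat132 (g : ℕ → ℕ) (n : ℕ) : Prop :=
  ∃ i j l, i < j ∧ j < l ∧ l < n ∧ g i < g l ∧ g l < g j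

def Pat213 (g : ℕ → ℕ) (n : ℕ) : Prop :=
  ∃ i j l, i < j ∧ j < l ∧ l < n ∧ g j < g i ∧ g i < g l

lemma contains132_iff : PContains π p132 ↔ Pat132 (gOf π) n := by
  constructor
  · rintro ⟨f, hf, hc⟩
    refine ⟨(f 0).val, (f 1).val, (f 2).val, hf (by decide : (0:Fin 3) < 1),
      hf (by decide : (1:Fin 3) < 2), (f 2).isLt, ?_, ?_⟩
    · rw [gOf_val, gOf_val]
      exact (hc 0 2).mpr (by decide : p132 0 < p132 2)
    · rw [gOf_val, gOf_val]
      exact (hc 2 1).mpr (by decide : p132 2 < p132 1)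
  · rintro ⟨i, j, l, hij, hjl, hln, h1, h2⟩
    have hi : i < n := by omega
    have hj : j < n := by omega
    rw [gOf_val π ⟨i, hi⟩] at *
    rw [gOf_val π ⟨l, hln⟩] at *
    rw [gOf_val π ⟨j, hj⟩] at *
    refine ⟨fun t => if t.val = 0 then ⟨i, hi⟩ else if t.val = 1 then ⟨j, hj⟩ else ⟨l, hln⟩,
      ?_, ?_⟩
    · intro s t hst
      fin_cases s <;> fin_cases t <;>
        first
          | exact absurd hst (by decide)
          | exact Fin.mk_lt_mk.mpr (by omega)
    · intro s t
      fin_cases s <;> fin_cases t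
      · exact iff_of_false (lt_irrefl _) (by decide)
      · exact iff_of_true (show π ⟨i, hi⟩ < π ⟨j, hj⟩ from Fin.lt_def.mpr (by omega)) (by decide)
      · exact iff_of_true (show π ⟨i, hi⟩ < π ⟨l, hln⟩ from Fin.lt_def.mpr (by omega)) (by decide)
      · exact iff_of_false (show ¬ (π ⟨j, hj⟩ < π ⟨i, hi⟩) from fun hc => absurd (Fin.lt_def.mp hc) (by omega)) (by decide)
      · exact iff_of_false (lt_irrefl _) (by decide)
      · exact iff_of_false (show ¬ (π ⟨j, hj⟩ < π ⟨l, hln⟩) from fun hc => absurd (Fin.lt_def.mp hc) (by omega)) (by decide)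
      · exact iff_of_false (show ¬ (π ⟨l, hln⟩ < π ⟨i, hi⟩) from fun hc => absurd (Fin.lt_def.mp hc) (by omega)) (by decide)
      · exact iff_of_true (show π ⟨l, hln⟩ < π ⟨j, hj⟩ from Fin.lt_def.mpr (by omega)) (by decide)
      · exact iff_of_false (lt_irrefl _) (by decide)

lemma contains213_iff : PContains π p213 ↔ Pat213 (gOf π) n := by
  constructor
  · rintro ⟨f, hf, hc⟩
    refine ⟨(f 0).val, (f 1).val, (f 2).val, hf (by decide : (0:Fin 3) < 1),
      hf (by decide : (1:Fin 3) < 2), (f 2).isLt, ?_, ?_⟩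
    · rw [gOf_val, gOf_val]
      exact (hc 1 0).mpr (by decide : p213 1 < p213 0)
    · rw [gOf_val, gOf_val]
      exact (hc 0 2).mpr (by decide : p213 0 < p213 2)
  · rintro ⟨i, j, l, hij, hjl, hln, h1, h2⟩
    have hi : i < n := by omega
    have hj : j < n := by omega
    rw [gOf_val π ⟨i, hi⟩] at *
    rw [gOf_val π ⟨l, hln⟩] at *
    rw [gOf_val π ⟨j, hj⟩] at *
    refine ⟨fun t => if t.val = 0 then ⟨i, hi⟩ else if t.val = 1 then ⟨j, hj⟩ else ⟨l, hln⟩,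
      ?_, ?_⟩
    · intro s t hst
      fin_cases s <;> fin_cases t <;>
        first
          | exact absurd hst (by decide)
          | exact Fin.mk_lt_mk.mpr (by omega)
    · intro s t
      fin_cases s <;> fin_cases t
      · exact iff_of_false (lt_irrefl _) (by decide)
      · exact iff_of_false (show ¬ (π ⟨i, hi⟩ < π ⟨j, hj⟩) from fun hc => absurd (Fin.lt_def.mp hc) (by omega)) (by decide)
      · exact iff_of_true (show π ⟨i, hi⟩ < π ⟨l, hln⟩ from Fin.lt_def.mpr (by omega)) (by decide)
      · exact iff_of_true (show π ⟨j, hj⟩ < π ⟨i, hi⟩ from Fin.lt_def.mpr (by omega)) (by decide)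
      · exact iff_of_false (lt_irrefl _) (by decide)
      · exact iff_of_true (show π ⟨j, hj⟩ < π ⟨l, hln⟩ from Fin.lt_def.mpr (by omega)) (by decide)
      · exact iff_of_false (show ¬ (π ⟨l, hln⟩ < π ⟨i, hi⟩) from fun hc => absurd (Fin.lt_def.mp hc) (by omega)) (by decide)
      · exact iff_of_false (show ¬ (π ⟨l, hln⟩ < π ⟨j, hj⟩) from fun hc => absurd (Fin.lt_def.mp hc) (by omega)) (by decide)
      · exact iff_of_false (lt_irrefl _) (by decide)

lemma gOf_mk {p : ℕ} (hp : p < n) : gOf π p = π ⟨p, hp⟩ := by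
  simp [gOf, hp]

lemma runFill' {g : ℕ → ℕ}
    (hord : ∀ p q, p < q → q < n → g q < g p ∨ g q = g p + (q - p))
    {p d : ℕ} (hd : p + d < n) (hrun : g (p + d) = g p + d) :
    ∀ e ≤ d, g (p + e) = g p + e := by
  intro e he
  rcases eq_or_lt_of_le he with rfl | helt
  · exact hrun
  rcases Nat.eq_zero_or_pos e with rfl | hepos
  · simp
  rcases hord p (p + e) (by omega) (by omega) with h1 | h1
  · rcases hord (p + e) (p + d) (by omega) hd with h2 | h2 <;> omega
  · omega

lemma stepGe {k : ℕ} (f : Fin k → Fin n) (hf : StrictMono f) (h0 : 0 < k) :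
    ∀ t (ht : t < k), (f ⟨0, h0⟩ : ℕ) + t ≤ (f ⟨t, ht⟩ : ℕ) := by
  intro t
  induction t with
  | zero => intro ht; simp
  | succ t ih =>
    intro ht
    have h1 := ih (by omega)
    have h2 : f ⟨t, by omega⟩ < f ⟨t + 1, ht⟩ := hf (Fin.mk_lt_mk.mpr (by omega))
    have h3 := Fin.lt_def.mp h2
    omega

lemma containsId_iff {k : ℕ} (hk : 2 ≤ k)
    (hord : ∀ p q, p < q → q < n → gOf π q < gOf π p ∨ gOf π q = gOf π p + (q - p)) :
    PContains π (Equiv.refl (Fin k)) ↔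
      ∃ i, i + (k - 1) < n ∧ gOf π (i + (k - 1)) = gOf π i + (k - 1) := by
  constructor
  · rintro ⟨f, hf, hc⟩
    set p := (f ⟨0, by omega⟩ : ℕ) with hp
    set q := (f ⟨k - 1, by omega⟩ : ℕ) with hq
    have hlt : f ⟨0, by omega⟩ < f ⟨k - 1, by omega⟩ := hf (Fin.mk_lt_mk.mpr (by omega))
    have hpq : p < q := Fin.lt_def.mp hlt
    have hqn : q < n := (f ⟨k - 1, by omega⟩).isLt
    have hval : π (f ⟨0, by omega⟩) < π (f ⟨k - 1, by omega⟩) :=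
      (hc ⟨0, by omega⟩ ⟨k - 1, by omega⟩).mpr
        (show ((⟨0, by omega⟩ : Fin k) : Fin k) < ⟨k - 1, by omega⟩ from
          Fin.mk_lt_mk.mpr (by omega))
    have hval' : gOf π p < gOf π q := by
      rw [hp, hq, gOf_val, gOf_val]
      exact Fin.lt_def.mp hval
    rcases hord p q hpq hqn with h | h
    · omega
    · have hge := stepGe f hf (by omega) (k - 1) (by omega)
      have hrun : gOf π (p + (q - p)) = gOf π p + (q - p) := by
        rw [show p + (q - p) = q by omega]
        exact h
      have hfill := runFill' hord (by omega) hrun (k - 1) (by omega)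
      exact ⟨p, by omega, hfill⟩
  · rintro ⟨i, hi, hrun⟩
    have hfill := runFill' hord hi hrun
    refine ⟨fun t => ⟨i + t.val, by have := t.isLt; omega⟩,
      fun s t hst => Fin.mk_lt_mk.mpr (by have := Fin.lt_def.mp hst; omega),
      fun s t => ?_⟩
    have hsn : i + s.val < n := by have := s.isLt; omega
    have htn : i + t.val < n := by have := t.isLt; omega
    have hs : gOf π (i + s.val) = gOf π i + s.val := hfill s.val (by have := s.isLt; omega)
    have ht : gOf π (i + t.val) = gOf π i + t.val := hfill t.val (by have := t.isLt; omega)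
    rw [gOf_mk π hsn] at hs
    rw [gOf_mk π htn] at ht
    constructor
    · intro h
      have h' : ((π ⟨i + s.val, hsn⟩ : Fin n) : ℕ) < ((π ⟨i + t.val, htn⟩ : Fin n) : ℕ) :=
        Fin.lt_def.mp h
      show s < t
      exact Fin.lt_def.mpr (by omega)
    · intro h
      have h' : s.val < t.val := Fin.lt_def.mp (show s < t from h)
      show π ⟨i + s.val, hsn⟩ < π ⟨i + t.val, htn⟩
      exact Fin.lt_def.mpr (by omega)

lemma q_of_avoid (h132 : ¬ Pat132 (gOf π) n) (h213 : ¬ Pat213 (gOf π) n) :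
    ∀ p q, p < q → q < n → gOf π q < gOf π p ∨ gOf π q = gOf π p + (q - p) := by
  suffices H : ∀ d p q, q - p = d → p < q → q < n →
      gOf π q < gOf π p ∨ gOf π q = gOf π p + (q - p) by
    intro p q h1 h2; exact H (q - p) p q rfl h1 h2
  intro d
  induction d using Nat.strong_induction_on with
  | _ d ih =>
    intro p q hd hpq hqn
    by_cases hd1 : d = 1
    · by_contra hcon
      push_neg at hcon
      obtain ⟨hc1, hc2⟩ := hcon
      have hne : gOf π p ≠ gOf π q := fun he => by
        have := gOf_inj π (by omega) hqn he; omega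
      have hgt : gOf π p + 2 ≤ gOf π q := by omega
      have hvn : gOf π p + 1 < n := by have := gOf_lt π hqn; omega
      obtain ⟨m, hm, hgm⟩ := gOf_surj π hvn
      have hmp : m ≠ p := fun he => by subst he; omega
      have hmq : m ≠ q := fun he => by subst he; omega
      rcases lt_trichotomy m p with h | h | h
      · exact h213 ⟨m, p, q, h, hpq, hqn, by omega, by omega⟩
      · omega
      · have hqm : q < m := by omega
        exact h132 ⟨p, q, m, hpq, hqm, hm, by omega, by omega⟩
    · have hd2 : 2 ≤ d := by omega
      have h1 := ih 1 (by omega) p (p + 1) (by omega) (by omega) (by omega)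
      have h2 := ih (d - 1) (by omega) (p + 1) q (by omega) (by omega) hqn
      rcases h1 with h1 | h1
      · rcases h2 with h2 | h2
        · left; omega
        · rcases lt_trichotomy (gOf π q) (gOf π p) with h3 | h3 | h3
          · left; exact h3
          · exact absurd (gOf_inj π (by omega) hqn h3.symm) (by omega)
          · exfalso
            set e := gOf π p - gOf π (p + 1) with hedef
            have he1 : 1 ≤ e := by omega
            have he2 : e < q - (p + 1) := by omega
            have h4 := ih e (by omega) (p + 1) (p + 1 + e) (by omega) (by omega) (by omega)
            rcases h4 with h4 | h4
            · have h5 := ih (q - (p + 1 + e)) (by omega) (p + 1 + e) q (by omega)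
                (by omega) hqn
              rcases h5 with h5 | h5 <;> omega
            · have := gOf_inj π (p := p) (q := p + 1 + e) (by omega) (by omega) (by omega)
              omega
      · rcases h2 with h2 | h2
        · left
          have hne : gOf π q ≠ gOf π p := fun he => by
            have := gOf_inj π hqn (by omega) he; omega
          omega
        · right; omega

lemma noPat132_of_q
    (hord : ∀ p q, p < q → q < n → gOf π q < gOf π p ∨ gOf π q = gOf π p + (q - p)) :
    ¬ Pat132 (gOf π) n := by
  rintro ⟨i, j, l, hij, hjl, hln, h1, h2⟩
  rcases hord i j hij (by omega) with h | h
  · omega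
  · rcases hord i l (by omega) hln with h' | h' <;> omega

lemma noPat213_of_q
    (hord : ∀ p q, p < q → q < n → gOf π q < gOf π p ∨ gOf π q = gOf π p + (q - p)) :
    ¬ Pat213 (gOf π) n := by
  rintro ⟨i, j, l, hij, hjl, hln, h1, h2⟩
  rcases hord i l (by omega) hln with h | h
  · omega
  · rcases hord j l hjl hln with h' | h' <;> omega

lemma good_iff {k : ℕ} (hk : 2 ≤ k) :
    (PAvoids π (Equiv.refl (Fin k)) ∧ PAvoids π p132 ∧ PAvoids π p213) ↔
      GFun n (k - 1) (gOf π) := by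
  constructor
  · rintro ⟨ha, hb, hc⟩
    have h132 : ¬ Pat132 (gOf π) n := fun h => hb ((contains132_iff π).mpr h)
    have h213 : ¬ Pat213 (gOf π) n := fun h => hc ((contains213_iff π).mpr h)
    have hord := q_of_avoid π h132 h213
    refine ⟨fun p hp => gOf_lt π hp, fun v hv => gOf_surj π hv, hord, ?_⟩
    intro i hi hrun
    exact ha ((containsId_iff π hk hord).mpr ⟨i, hi, hrun⟩)
  · rintro ⟨hmaps, hsurj, hord, hnorun⟩
    refine ⟨?_, ?_, ?_⟩
    · intro hcontain
      obtain ⟨i, hi, hr⟩ := (containsId_iff π hk hord).mp hcontain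
      exact hnorun i hi hr
    · intro hcontain
      exact noPat132_of_q π hord ((contains132_iff π).mp hcontain)
    · intro hcontain
      exact noPat213_of_q π hord ((contains213_iff π).mp hcontain)


lemma gfun_of_comp' {n K : ℕ} (l : List ℕ) (hsum : l.sum = n)
    (hparts : ∀ x ∈ l, 1 ≤ x ∧ x ≤ K) : GFun n K (permFun l) :=
  hsum ▸ gfun_of_comp l hparts

noncomputable def permOfComp {n K : ℕ} (l : List ℕ) (hsum : l.sum = n)
    (hparts : ∀ x ∈ l, 1 ≤ x ∧ x ≤ K) : Equiv.Perm (Fin n) :=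
  Equiv.ofBijective
    (fun p => ⟨permFun l p.val, (gfun_of_comp' l hsum hparts).maps p.val p.isLt⟩)
    (Finite.injective_iff_bijective.mp (fun p q h => Fin.ext
      ((gfun_of_comp' l hsum hparts).inj p.isLt q.isLt (congrArg Fin.val h))))

lemma gOf_permOfComp {n K : ℕ} (l : List ℕ) (hsum : l.sum = n)
    (hparts : ∀ x ∈ l, 1 ≤ x ∧ x ≤ K) :
    ∀ p, p < n → gOf (permOfComp (K := K) l hsum hparts) p = permFun l p := by
  intro p hp
  rw [gOf_mk _ hp]
  rfl

end St2

/-- For `k ≥ 2`, the number of permutations of `{1,…,n}` avoiding `12⋯k` (the identity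
permutation of `{1,…,k}`), 132, and 213 equals `F_{k-1, n+1}`. -/
theorem statement2 (k n : ℕ) (hk : 2 ≤ k) :
    Nat.card {π : Equiv.Perm (Fin n) //
        PAvoids π (Equiv.refl (Fin k)) ∧ PAvoids π p132 ∧ PAvoids π p213} =
      genFib (k - 1) (n + 1) := by
  classical
  have hprop : ∀ (l : {l : List ℕ // l ∈ St2.compSet (k - 1) n}),
      l.1.sum = n ∧ ∀ x ∈ l.1, 1 ≤ x ∧ x ≤ k - 1 :=
    fun l => (St2.mem_compSet (k - 1) n l.1).mp l.2
  have hcard : Nat.card {l : List ℕ // l ∈ St2.compSet (k - 1) n} =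
      Nat.card {π : Equiv.Perm (Fin n) //
        PAvoids π (Equiv.refl (Fin k)) ∧ PAvoids π p132 ∧ PAvoids π p213} := by
    refine Nat.card_eq_of_bijective
      (fun l => ⟨St2.permOfComp l.1 (hprop l).1 (hprop l).2, ?_⟩) ⟨?_, ?_⟩
    · rw [St2.good_iff _ hk]
      exact St2.gfun_congr
        (fun p hp => (St2.gOf_permOfComp l.1 (hprop l).1 (hprop l).2 p hp).symm)
        (St2.gfun_of_comp' l.1 (hprop l).1 (hprop l).2)
    · rintro ⟨l, hl⟩ ⟨l', hl'⟩ he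
      have he' : St2.permOfComp l (hprop ⟨l, hl⟩).1 (hprop ⟨l, hl⟩).2 =
          St2.permOfComp l' (hprop ⟨l', hl'⟩).1 (hprop ⟨l', hl'⟩).2 :=
        congrArg Subtype.val he
      apply Subtype.ext
      refine St2.comp_ext n l l' (hprop ⟨l, hl⟩).1 (hprop ⟨l', hl'⟩).1
        (fun x hx => ((hprop ⟨l, hl⟩).2 x hx).1)
        (fun x hx => ((hprop ⟨l', hl'⟩).2 x hx).1) ?_
      intro p hp
      have h1 := St2.gOf_permOfComp l (hprop ⟨l, hl⟩).1 (hprop ⟨l, hl⟩).2 p hp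
      have h2 := St2.gOf_permOfComp l' (hprop ⟨l', hl'⟩).1 (hprop ⟨l', hl'⟩).2 p hp
      have h3 := congrArg (fun σ => St2.gOf σ p) he'
      rw [← h1, ← h2, h3]
    · rintro ⟨π, hπ⟩
      have hg : St2.GFun n (k - 1) (St2.gOf π) := (St2.good_iff π hk).mp hπ
      obtain ⟨l, ⟨hsum, hparts⟩, hval⟩ := St2.exists_comp (by omega : 1 ≤ k - 1) n _ hg
      refine ⟨⟨l, (St2.mem_compSet _ n l).mpr ⟨hsum, hparts⟩⟩, ?_⟩
      apply Subtype.ext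
      apply Equiv.ext
      intro p
      apply Fin.ext
      show St2.permFun l p.val = ((π p : Fin n) : ℕ)
      rw [hval p.val p.isLt]
      exact St2.gOf_val π p
  rw [← hcard, Nat.card_eq_finsetCard, St2.card_compSet]
end

section
/- Let b be a positive integer and let γ_{0,b,0} be the permutation of {1,…,b+1} whose one-line notation is b, b−1, …, 2, 1, b+1. Then for all n ≥ 1, |S_n(123, 132, γ_{0,b,0})| = F_{b,n+1}. -/
/-- The pattern 123 (the identity permutation of `{1,2,3}`). -/
def p123 : Equiv.Perm (Fin 3) := Equiv.refl (Fin 3)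

/-!
A permutation avoids 123 and 132 iff every entry followed by a larger one lies above everything
after that larger one. If such a permutation of `{0, …, n}` has its maximum at position `p`, the
entries before the maximum are `n - 1, …, n - p` in decreasing order and everything after it is
smaller, so it is the skew sum `γ_{0,p,0} ⊖ σ` with `σ` again avoiding 123 and 132. The patterns
123, 132 and `γ_{0,b,0}` (for `b ≥ 1`) start below their last entry, so they occur in a skew sum
only inside one of its two blocks, and `γ_{0,b,0}` occurs in `γ_{0,p,0}` iff `b ≤ p`. Hence the
avoiders of size `n + 1` are exactly the `γ_{0,p,0} ⊖ σ` with `p < b` and `σ` an avoider of size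
`n - p`, which is the recursion of `F_{b,·}`.
-/

open Equiv Finset

section containment
variable {n a k : ℕ} {π : Perm (Fin n)} {ρ : Perm (Fin a)} {τ : Perm (Fin k)}

theorem PContains.trans (h₁ : PContains π ρ) (h₂ : PContains ρ τ) : PContains π τ := by
  obtain ⟨g, hg, hgρ⟩ := h₁
  obtain ⟨f, hf, hfτ⟩ := h₂
  exact ⟨g ∘ f, hg.comp hf, fun s t => (hgρ _ _).trans (hfτ s t)⟩

theorem PContains.le (h : PContains π τ) : k ≤ n := by
  obtain ⟨f, hf, -⟩ := h
  simpa using Fintype.card_le_of_injective f hf.injective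

theorem pcontains_of_lt_imp_lt (f : Fin k → Fin n) (hf : StrictMono f)
    (h : ∀ s t, τ s < τ t → π (f s) < π (f t)) : PContains π τ := by
  refine ⟨f, hf, fun s t => ⟨fun hst => ?_, h s t⟩⟩
  rcases lt_trichotomy (τ s) (τ t) with hlt | heq | hgt
  · exact hlt
  · rw [τ.injective heq] at hst
    exact absurd hst (lt_irrefl _)
  · exact absurd (h t s hgt) hst.not_gt

end containment

/-- The skew sum `ρ ⊖ σ`: the first `a` positions carry `ρ`, shifted above all values of `σ`.
The size is written `m + a` so that `skewSum (gamma p) σ` is a permutation of `Fin (m + p + 1)`. -/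
def skewSum {a m : ℕ} (ρ : Perm (Fin a)) (σ : Perm (Fin m)) : Perm (Fin (m + a)) :=
  (finCongr (Nat.add_comm m a)).trans <| finSumFinEquiv.symm.trans <|
    (ρ.sumCongr σ).trans <| (Equiv.sumComm _ _).trans finSumFinEquiv

section skewSum
variable {a m k : ℕ} (ρ : Perm (Fin a)) (σ : Perm (Fin m))

theorem skewSum_apply_of_lt (i : Fin (m + a)) (hi : (i : ℕ) < a) :
    (skewSum ρ σ i : ℕ) = m + ρ ⟨i, hi⟩ := by
  have : finCongr (Nat.add_comm m a) i = Fin.castAdd m ⟨i, hi⟩ := rfl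
  simp only [skewSum, trans_apply, this, finSumFinEquiv_symm_apply_castAdd, sumCongr_apply,
    Sum.map_inl, sumComm_apply, Sum.swap_inl, finSumFinEquiv_apply_right, Fin.val_natAdd]

theorem skewSum_apply_of_le (i : Fin (m + a)) (hi : a ≤ (i : ℕ)) :
    (skewSum ρ σ i : ℕ) = σ ⟨i - a, by omega⟩ := by
  have : finCongr (Nat.add_comm m a) i = Fin.natAdd a ⟨i - a, by omega⟩ :=
    Fin.ext (by simp only [finCongr_apply, Fin.val_cast, Fin.val_natAdd]; omega)
  simp only [skewSum, trans_apply, this, finSumFinEquiv_symm_apply_natAdd, sumCongr_apply,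
    Sum.map_inr, sumComm_apply, Sum.swap_inr, finSumFinEquiv_apply_left, Fin.val_castAdd]

end skewSum


section skewSum
variable {a m k : ℕ} {ρ : Perm (Fin a)} {σ : Perm (Fin m)}

theorem pcontains_skewSum_left : PContains (skewSum ρ σ) ρ := by
  refine ⟨fun i => ⟨i, by omega⟩, fun i j h => h, fun i j => ?_⟩
  rw [Fin.lt_def, skewSum_apply_of_lt _ _ ⟨i, _⟩ i.isLt, skewSum_apply_of_lt _ _ ⟨j, _⟩ j.isLt,
    Fin.lt_def]
  simp

theorem pcontains_skewSum_right : PContains (skewSum ρ σ) σ := by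
  refine ⟨fun j => ⟨a + j, by omega⟩, fun i j h => Fin.mk_lt_mk.2 (Nat.add_lt_add_left h a),
    fun i j => ?_⟩
  rw [Fin.lt_def, skewSum_apply_of_le _ _ _ (Nat.le_add_right _ _),
    skewSum_apply_of_le _ _ _ (Nat.le_add_right _ _)]
  simp only [Nat.add_sub_cancel_left, Fin.eta, Fin.lt_def]

theorem pcontains_skewSum_iff {τ : Perm (Fin (k + 1))} (hτ : τ 0 < τ (Fin.last k)) :
    PContains (skewSum ρ σ) τ ↔ PContains ρ τ ∨ PContains σ τ := by
  refine ⟨fun ⟨f, hf, hfτ⟩ => ?_,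
    fun h => h.elim pcontains_skewSum_left.trans pcontains_skewSum_right.trans⟩
  by_cases hlast : (f (Fin.last k) : ℕ) < a
  · have hlt (s : Fin (k + 1)) : (f s : ℕ) < a :=
      lt_of_le_of_lt (hf.monotone (Fin.le_last s)) hlast
    refine Or.inl ⟨fun s => ⟨f s, hlt s⟩, fun s t hst => hf hst, fun s t => ?_⟩
    dsimp only
    rw [← hfτ, Fin.lt_def, Fin.lt_def, skewSum_apply_of_lt _ _ _ (hlt s),
      skewSum_apply_of_lt _ _ _ (hlt t)]
    omega
  by_cases hzero : a ≤ (f 0 : ℕ)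
  · have hle (s : Fin (k + 1)) : a ≤ (f s : ℕ) :=
      le_trans hzero (hf.monotone (Fin.zero_le s))
    refine Or.inr ⟨fun s => ⟨f s - a, by omega⟩, fun s t hst => ?_, fun s t => ?_⟩
    · have := hf hst
      simp only [Fin.lt_def] at this ⊢
      have := hle s
      omega
    · dsimp only
      rw [← hfτ, Fin.lt_def, Fin.lt_def, skewSum_apply_of_le _ _ _ (hle s),
        skewSum_apply_of_le _ _ _ (hle t)]
  · -- the occurrence starts in the upper block and ends in the lower one, against `hτ`
    have h := (hfτ 0 (Fin.last k)).2 hτ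
    rw [Fin.lt_def, skewSum_apply_of_lt _ _ _ (by omega), skewSum_apply_of_le _ _ _ (by omega)] at h
    exact absurd h (not_lt.2 ((Fin.is_lt _).le.trans (Nat.le_add_right _ _)))

theorem pavoids_skewSum_iff {τ : Perm (Fin (k + 1))} (hτ : τ 0 < τ (Fin.last k)) :
    PAvoids (skewSum ρ σ) τ ↔ PAvoids ρ τ ∧ PAvoids σ τ := by
  simp only [PAvoids, pcontains_skewSum_iff hτ, not_or]

theorem skewSum_injective_right (ρ : Perm (Fin a)) :
    Function.Injective (skewSum ρ : Perm (Fin m) → Perm (Fin (m + a))) := by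
  intro σ σ' h
  ext j
  have hj := congrArg (fun π : Perm (Fin (m + a)) => (π ⟨a + j, by omega⟩ : ℕ)) h
  simpa [skewSum_apply_of_le] using hj

end skewSum

/-- `γ_{0,p,0}`, with one-line notation `p, p - 1, …, 1, p + 1`. -/
def gamma (p : ℕ) : Perm (Fin (p + 1)) :=
  finSumFinEquiv.permCongr (Fin.revPerm.sumCongr (Equiv.refl (Fin 1)))

theorem gamma_apply_val {p : ℕ} (i : Fin (p + 1)) :
    (gamma p i : ℕ) = if (i : ℕ) < p then p - 1 - i else p := by
  induction i using Fin.addCases with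
  | left i =>
    simp only [gamma, permCongr_apply, finSumFinEquiv_symm_apply_castAdd, sumCongr_apply,
      Sum.map_inl, finSumFinEquiv_apply_left, Fin.val_castAdd, Fin.revPerm_apply, Fin.val_rev,
      i.isLt, if_true]
    omega
  | right j =>
    simp only [gamma, permCongr_apply, finSumFinEquiv_symm_apply_natAdd, sumCongr_apply,
      Sum.map_inr, refl_apply, finSumFinEquiv_apply_right, Fin.val_natAdd]
    simp [Fin.fin_one_eq_zero j]

theorem pcontains_gamma_gamma_iff {p b : ℕ} : PContains (gamma p) (gamma b) ↔ b ≤ p := by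
  refine ⟨fun h => by simpa using h.le, fun hbp => ?_⟩
  refine pcontains_of_lt_imp_lt (fun s => ⟨if (s : ℕ) < b then s else p, by split_ifs <;> omega⟩)
    (fun s t hst => ?_) (fun s t hst => ?_)
  · simp only [Fin.lt_def] at hst ⊢
    have := t.isLt
    split_ifs <;> omega
  · simp only [Fin.lt_def, gamma_apply_val] at hst ⊢
    have := s.isLt
    have := t.isLt
    split_ifs at hst ⊢ <;> omega

theorem gamma_zero_lt_last {b : ℕ} (hb : 0 < b) : gamma b 0 < gamma b (Fin.last b) := by
  rw [Fin.lt_def, gamma_apply_val, gamma_apply_val]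
  simp [hb]

def AscentBoundsSuffix {n : ℕ} (π : Perm (Fin n)) : Prop :=
  ∀ i j k, i < j → j < k → π i < π j → π k < π i

section ascent
variable {n : ℕ} {π : Perm (Fin n)}

theorem AscentBoundsSuffix.pavoids (hπ : AscentBoundsSuffix π) {τ : Perm (Fin 3)}
    (h01 : τ 0 < τ 1) (h02 : τ 0 < τ 2) : PAvoids π τ := fun ⟨f, hf, hfτ⟩ =>
  ((hfτ 0 2).2 h02).not_gt (hπ _ _ _ (hf (by decide)) (hf (by decide)) ((hfτ 0 1).2 h01))

theorem pavoids_p123_and_p132_iff :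
    PAvoids π p123 ∧ PAvoids π p132 ↔ AscentBoundsSuffix π := by
  refine ⟨fun ⟨h123, h132⟩ i j k hij hjk hπij => ?_,
    fun hπ => ⟨hπ.pavoids (by decide) (by decide), hπ.pavoids (by decide) (by decide)⟩⟩
  have hf : StrictMono ![i, j, k] :=
    Fin.strictMono_iff_lt_succ.2 (by simp [Fin.forall_fin_two, hij, hjk])
  by_contra hπki
  have hπik : π i < π k := lt_of_le_of_ne (not_lt.1 hπki)
    (fun h => (hij.trans hjk).ne (π.injective h))
  rcases lt_or_gt_of_ne (π.injective.ne hjk.ne) with hπjk | hπkj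
  · refine h123 (pcontains_of_lt_imp_lt _ hf fun s t hst => ?_)
    fin_cases s <;> fin_cases t <;> simp_all [p123]
  · refine h132 (pcontains_of_lt_imp_lt _ hf fun s t hst => ?_)
    fin_cases s <;> fin_cases t <;> simp_all [p132]

end ascent

theorem ascentBoundsSuffix_gamma (p : ℕ) : AscentBoundsSuffix (gamma p) := by
  intro i j k hij hjk hlt
  simp only [Fin.lt_def, gamma_apply_val] at hij hjk hlt
  have := k.isLt
  split_ifs at hlt <;> omega

theorem card_le_of_forall_apply_lt {α : Type*} {n : ℕ} {s : Finset α} {f : α → Fin n}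
    (hf : Set.InjOn f s) {x : Fin n} (h : ∀ i ∈ s, f i < x) : #s ≤ x := by
  simpa using card_le_card_of_injOn f (t := Iio x) (fun i hi => mem_Iio.2 (h i hi)) hf

theorem card_le_of_forall_lt_apply {α : Type*} {n : ℕ} {s : Finset α} {f : α → Fin n}
    (hf : Set.InjOn f s) {x : Fin n} (h : ∀ i ∈ s, x < f i) : #s ≤ n - 1 - x := by
  simpa using card_le_card_of_injOn f (t := Ioi x) (fun i hi => mem_Ioi.2 (h i hi)) hf

section maxPos
variable {n : ℕ} {π : Perm (Fin (n + 1))} {P : Fin (n + 1)}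

theorem apply_lt_of_apply_eq_last (hP : π P = Fin.last n) {i : Fin (n + 1)} (hi : i ≠ P) :
    π i < π P :=
  hP ▸ Fin.lt_last_iff_ne_last.2 (hP ▸ π.injective.ne hi)

theorem AscentBoundsSuffix.apply_lt_apply_of_lt_of_lt (hπ : AscentBoundsSuffix π)
    (hP : π P = Fin.last n) {i k : Fin (n + 1)} (hi : i < P) (hk : P < k) : π k < π i :=
  hπ i P k hi hk (apply_lt_of_apply_eq_last hP hi.ne)

theorem AscentBoundsSuffix.strictAntiOn_Iio (hπ : AscentBoundsSuffix π)
    (hP : π P = Fin.last n) : StrictAntiOn π (Set.Iio P) := by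
  intro i _ j hj hij
  refine lt_of_le_of_ne (not_lt.1 fun hπij => ?_) (π.injective.ne hij.ne')
  exact (hπ i j P hij hj hπij).not_ge (hP ▸ Fin.le_last _)

theorem AscentBoundsSuffix.val_apply_of_lt (hπ : AscentBoundsSuffix π)
    (hP : π P = Fin.last n) {i : Fin (n + 1)} (hi : i < P) : (π i : ℕ) = n - 1 - i := by
  have habove : i + 1 ≤ n - π i := by
    have := card_le_of_forall_lt_apply (s := insert P (Iio i)) π.injective.injOn (x := π i) ?_
    · rwa [card_insert_of_notMem (by simpa using hi.le), Fin.card_Iio] at this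
    intro j hj
    rcases mem_insert.1 hj with rfl | hj
    · exact apply_lt_of_apply_eq_last hP hi.ne
    · exact hπ.strictAntiOn_Iio hP ((mem_Iio.1 hj).trans hi) hi (mem_Iio.1 hj)
  have hbelow : n - 1 - i ≤ π i := by
    have := card_le_of_forall_apply_lt (s := (Ioi i).erase P) π.injective.injOn (x := π i) ?_
    · rw [card_erase_of_mem (by simpa using hi), Fin.card_Ioi] at this
      omega
    intro j hj
    obtain ⟨hjP, hij⟩ := mem_erase.1 hj
    rcases lt_or_gt_of_ne hjP with hjP | hPj
    · exact hπ.strictAntiOn_Iio hP hi hjP (mem_Ioi.1 hij)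
    · exact hπ.apply_lt_apply_of_lt_of_lt hP hi hPj
  omega

theorem AscentBoundsSuffix.val_apply_lt_of_gt (hπ : AscentBoundsSuffix π)
    (hP : π P = Fin.last n) {k : Fin (n + 1)} (hk : P < k) : (π k : ℕ) < n - P := by
  have := card_le_of_forall_lt_apply (s := Iic P) π.injective.injOn (x := π k) fun i hi => ?_
  · rw [Fin.card_Iic] at this
    have := k.isLt
    omega
  rcases (mem_Iic.1 hi).lt_or_eq with hiP | rfl
  · exact hπ.apply_lt_apply_of_lt_of_lt hP hiP hk
  · exact apply_lt_of_apply_eq_last hP hk.ne'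

end maxPos

theorem AscentBoundsSuffix.exists_eq_skewSum_gamma {m p : ℕ} {π : Perm (Fin (m + p + 1))}
    (hπ : AscentBoundsSuffix π) (hp : (π.symm (Fin.last (m + p)) : ℕ) = p) :
    ∃ σ : Perm (Fin m), π = skewSum (gamma p) σ := by
  set P := π.symm (Fin.last (m + p))
  have hP : π P = Fin.last (m + p) := π.apply_symm_apply _
  have hsuffix (j : Fin m) : (π ⟨p + 1 + j, by omega⟩ : ℕ) < m := by
    have := hπ.val_apply_lt_of_gt hP (k := ⟨p + 1 + j, by omega⟩)
      (Fin.lt_def.2 (by dsimp only; omega))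
    omega
  let σ : Perm (Fin m) := ofBijective (fun j => ⟨π ⟨p + 1 + j, by omega⟩, hsuffix j⟩)
    (Finite.injective_iff_bijective.1 fun j j' h => by
      have := congrArg Fin.val (π.injective (Fin.ext (Fin.mk.inj h)))
      ext
      simpa using this)
  refine ⟨σ, Equiv.ext fun i => Fin.ext ?_⟩
  rcases lt_trichotomy (i : ℕ) p with hi | hi | hi
  · rw [skewSum_apply_of_lt _ _ _ (by omega), gamma_apply_val,
      hπ.val_apply_of_lt hP (by rw [Fin.lt_def]; omega)]
    simp only [hi, if_true]
    omega
  · obtain rfl : i = P := Fin.ext (by omega)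
    rw [skewSum_apply_of_lt _ _ _ (by omega), gamma_apply_val, hP]
    simp [hp]
  · rw [skewSum_apply_of_le _ _ _ (by omega)]
    simp only [σ, ofBijective_apply]
    congr 2
    ext
    simp only
    omega

open scoped Classical in
noncomputable def avoiders (b n : ℕ) : Finset (Perm (Fin n)) :=
  {π | PAvoids π p123 ∧ PAvoids π p132 ∧ PAvoids π (gamma b)}

section avoiders
variable {b m p : ℕ}

theorem mem_avoiders {n : ℕ} {π : Perm (Fin n)} :
    π ∈ avoiders b n ↔ PAvoids π p123 ∧ PAvoids π p132 ∧ PAvoids π (gamma b) := by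
  simp [avoiders]

theorem skewSum_gamma_mem_avoiders_iff {σ : Perm (Fin m)} :
    skewSum (gamma p) σ ∈ avoiders b (m + p + 1) ↔ p < b ∧ σ ∈ avoiders b m := by
  simp only [mem_avoiders]
  constructor
  · rintro ⟨h123, h132, hγ⟩
    exact ⟨not_le.1 fun hbp => hγ (pcontains_skewSum_left.trans (pcontains_gamma_gamma_iff.2 hbp)),
      fun h => h123 (pcontains_skewSum_right.trans h),
      fun h => h132 (pcontains_skewSum_right.trans h),
      fun h => hγ (pcontains_skewSum_right.trans h)⟩
  · rintro ⟨hpb, h123, h132, hγ⟩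
    have hgamma := ascentBoundsSuffix_gamma p
    exact ⟨(pavoids_skewSum_iff (by decide)).2 ⟨hgamma.pavoids (by decide) (by decide), h123⟩,
      (pavoids_skewSum_iff (by decide)).2 ⟨hgamma.pavoids (by decide) (by decide), h132⟩,
      (pavoids_skewSum_iff (gamma_zero_lt_last (by omega))).2
        ⟨fun h => (pcontains_gamma_gamma_iff.1 h).not_gt hpb, hγ⟩⟩

theorem exists_skewSum_gamma_eq_of_mem_avoiders {π : Perm (Fin (m + p + 1))}
    (hπ : π ∈ avoiders b _) (hp : (π.symm (Fin.last (m + p)) : ℕ) = p) :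
    p < b ∧ ∃ σ ∈ avoiders b m, skewSum (gamma p) σ = π := by
  obtain ⟨h123, h132, -⟩ := mem_avoiders.1 hπ
  obtain ⟨σ, rfl⟩ := (pavoids_p123_and_p132_iff.1 ⟨h123, h132⟩).exists_eq_skewSum_gamma hp
  obtain ⟨hpb, hσ⟩ := skewSum_gamma_mem_avoiders_iff.1 hπ
  exact ⟨hpb, σ, hσ, rfl⟩

theorem skewSum_gamma_symm_last (σ : Perm (Fin m)) :
    ((skewSum (gamma p) σ).symm (Fin.last (m + p)) : ℕ) = p := by
  have : skewSum (gamma p) σ ⟨p, by omega⟩ = Fin.last (m + p) := by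
    ext
    rw [skewSum_apply_of_lt _ _ _ (Nat.lt_succ_self p), gamma_apply_val]
    simp
  rw [← this, symm_apply_apply]

theorem filter_avoiders_eq_map (hpb : p < b) :
    {π ∈ avoiders b (m + p + 1) | (π.symm (Fin.last (m + p)) : ℕ) = p} =
      (avoiders b m).map ⟨skewSum (gamma p), skewSum_injective_right _⟩ := by
  ext π
  simp only [mem_filter, mem_map, Function.Embedding.coeFn_mk]
  constructor
  · rintro ⟨hπ, hp⟩
    exact (exists_skewSum_gamma_eq_of_mem_avoiders hπ hp).2
  · rintro ⟨σ, hσ, rfl⟩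
    exact ⟨skewSum_gamma_mem_avoiders_iff.2 ⟨hpb, hσ⟩, skewSum_gamma_symm_last σ⟩

end avoiders

theorem card_avoiders_succ (b n : ℕ) :
    #(avoiders b (n + 1)) = ∑ p ∈ range (min b (n + 1)), #(avoiders b (n - p)) := by
  rw [card_eq_sum_card_fiberwise (f := fun π => (π.symm (Fin.last n) : ℕ))
    (t := range (min b (n + 1)))]
  · refine sum_congr rfl fun p hp => ?_
    obtain ⟨hpb, hpn⟩ := lt_min_iff.1 (mem_range.1 hp)
    obtain ⟨m, rfl⟩ : ∃ m, n = m + p := ⟨n - p, by omega⟩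
    rw [filter_avoiders_eq_map hpb, card_map, Nat.add_sub_cancel]
  · intro π hπ
    simp only [coe_range, Set.mem_Iio, lt_min_iff]
    generalize hp : (π.symm (Fin.last n) : ℕ) = p
    obtain ⟨m, rfl⟩ : ∃ m, n = m + p := ⟨n - p, by have := hp ▸ Fin.is_le (π.symm _); omega⟩
    exact ⟨(exists_skewSum_gamma_eq_of_mem_avoiders hπ hp).1, by omega⟩

theorem genFib_add_two (k n : ℕ) : genFib k (n + 2) = ∑ i ∈ range k, genFib k (n + 1 - i) := by
  rw [genFib]

theorem card_avoiders (b n : ℕ) : #(avoiders b n) = genFib b (n + 1) := by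
  induction n using Nat.strong_induction_on with
  | _ n ih =>
    rcases n with _ | n
    · have : avoiders b 0 = univ := eq_univ_of_forall fun π =>
        mem_avoiders.2 ⟨fun h => by simpa using h.le, fun h => by simpa using h.le,
          fun h => by simpa using h.le⟩
      simp [this, genFib]
    · rw [card_avoiders_succ, genFib_add_two]
      refine sum_subset_zero_on_sdiff (range_subset_range.2 (min_le_left _ _)) ?_ ?_
      · intro p hp
        simp only [mem_sdiff, mem_range, lt_min_iff] at hp
        rw [show n + 1 - p = 0 by omega, genFib]
      · intro p hp
        rw [ih _ (by omega)]
        simp only [mem_range, lt_min_iff] at hp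
        congr 1
        omega

theorem statement5_general (b n : ℕ)
    (γ : Equiv.Perm (Fin (b + 1)))
    (hγ : ∀ i : Fin (b + 1), (γ i : ℕ) = if (i : ℕ) < b then b - 1 - (i : ℕ) else b) :
    Nat.card {π : Equiv.Perm (Fin n) //
        PAvoids π p123 ∧ PAvoids π p132 ∧ PAvoids π γ} = genFib b (n + 1) := by
  obtain rfl : γ = gamma b := Equiv.ext fun i => Fin.ext ((hγ i).trans (gamma_apply_val i).symm)
  rw [← card_avoiders, ← Nat.card_eq_finsetCard]
  exact Nat.card_congr (subtypeEquivRight fun π => mem_avoiders.symm)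

/-- Let `γ = γ_{0,b,0}` be the permutation of `{1,…,b+1}` with one-line notation
`b, b-1, …, 2, 1, b+1` (zero-indexed: `γ i = b - 1 - i` for `i < b` and `γ b = b`).
Then for `n ≥ 1`, `|S_n(123, 132, γ_{0,b,0})| = F_{b,n+1}`. -/
theorem statement5 (b n : ℕ) (hb : 1 ≤ b) (hn : 1 ≤ n)
    (γ : Equiv.Perm (Fin (b + 1)))
    (hγ : ∀ i : Fin (b + 1), (γ i : ℕ) = if (i : ℕ) < b then b - 1 - (i : ℕ) else b) :
    Nat.card {π : Equiv.Perm (Fin n) //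
        PAvoids π p123 ∧ PAvoids π p132 ∧ PAvoids π γ} = genFib b (n + 1) :=
  statement5_general b n γ hγ
end

section
/- Let b be a positive integer and let γ_{0,b,1} be the permutation of {1,…,b+2} whose one-line notation is b+1, b, …, 3, 2, b+2, 1. Then for all n ≥ 1, |S_n(132, 123, γ_{0,b,1})| = Σ_{k=1}^{n} F_{b,k}. -/
lemma pcontains_iff {n k : ℕ} (π : Equiv.Perm (Fin n)) (σ : Equiv.Perm (Fin k)) :
    PContains π σ ↔ ∃ f : Fin k → Fin n, StrictMono f ∧
      ∀ s t : Fin k, σ s < σ t → π (f s) < π (f t) := by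
  constructor
  · rintro ⟨f, hf, h⟩
    exact ⟨f, hf, fun s t hst => (h s t).2 hst⟩
  · rintro ⟨f, hf, h⟩
    refine ⟨f, hf, fun s t => ⟨fun hlt => ?_, h s t⟩⟩
    rcases lt_trichotomy (σ s) (σ t) with h1 | h1 | h1
    · exact h1
    · exact absurd (congrArg π (congrArg f (σ.injective h1))) (by intro he; rw [he] at hlt; exact lt_irrefl _ hlt)
    · exact absurd (h t s h1) (by intro h2; exact lt_asymm hlt h2)

/-- avoid both 123 and 132 characterization predicate -/
def AvB {n : ℕ} (π : Equiv.Perm (Fin n)) : Prop :=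
  ∀ i j k : Fin n, i < j → j < k → π i < π j → π i < π k → False

def ContG (b : ℕ) {n : ℕ} (π : Equiv.Perm (Fin n)) : Prop :=
  ∃ g : Fin (b+2) → Fin n, StrictMono g ∧
    (∀ s t : Fin (b+2), (s:ℕ) < (t:ℕ) → (t:ℕ) < b → π (g t) < π (g s)) ∧
    (∀ s : Fin (b+2), (s:ℕ) ≠ b → π (g s) < π (g ⟨b, by omega⟩)) ∧
    (∀ s : Fin (b+2), (s:ℕ) < b → π (g ⟨b+1, by omega⟩) < π (g s))

def Good (b : ℕ) {n : ℕ} (π : Equiv.Perm (Fin n)) : Prop := AvB π ∧ ¬ ContG b π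

lemma strictMono3_s6 {n : ℕ} (i j k : Fin n) (h1 : i < j) (h2 : j < k) :
    StrictMono ![i, j, k] := by
  intro s t hst
  fin_cases s <;> fin_cases t <;>
    simp_all [Matrix.cons_val_zero, Matrix.cons_val_one] <;> omega

lemma avoid_iff (b : ℕ) (hb : 1 ≤ b) {n : ℕ} (γ : Equiv.Perm (Fin (b + 2)))
    (hγ : ∀ i : Fin (b + 2),
      (γ i : ℕ) = if (i : ℕ) < b then b - (i : ℕ) else if (i : ℕ) = b then b + 1 else 0)
    (π : Equiv.Perm (Fin n)) :
    (PAvoids π p132 ∧ PAvoids π p123 ∧ PAvoids π γ) ↔ Good b π := by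
  have hγlt : ∀ s t : Fin (b+2), γ s < γ t ↔
      (((t:ℕ) < b ∧ ((s:ℕ) < b → (t:ℕ) < (s:ℕ)) ∧ (s:ℕ) ≠ b) ∨ ((t:ℕ) = b ∧ (s:ℕ) ≠ b)) := by
    intro s t
    rw [Fin.lt_def, hγ s, hγ t]
    have hs := s.isLt; have ht := t.isLt
    split_ifs <;> omega
  constructor
  · rintro ⟨h132, h123, hγav⟩
    constructor
    · intro i j k hij hjk h1 h2
      rcases lt_trichotomy (π j) (π k) with hc | hc | hc
      · refine h123 ((pcontains_iff π p123).2 ⟨![i,j,k], strictMono3_s6 i j k hij hjk, ?_⟩)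
        intro s t hst
        simp only [p123, Equiv.refl_apply] at hst
        fin_cases s <;> fin_cases t <;> simp_all <;> omega
      · exact absurd (π.injective hc) (by intro he; subst he; exact lt_irrefl _ hjk)
      · refine h132 ((pcontains_iff π p132).2 ⟨![i,j,k], strictMono3_s6 i j k hij hjk, ?_⟩)
        intro s t hst
        have : ∀ u : Fin 3, p132 u = ![0,2,1] u := fun u => rfl
        rw [this s, this t] at hst
        fin_cases s <;> fin_cases t <;> simp_all (config := {decide := true}) <;> omega
    · rintro ⟨g, hg, hc1, hc2, hc3⟩
      refine hγav ((pcontains_iff π γ).2 ⟨g, hg, ?_⟩)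
      intro s t hst
      rw [hγlt] at hst
      rcases hst with ⟨ht, himp, hsb⟩ | ⟨ht, hsb⟩
      · rcases lt_trichotomy (s:ℕ) (t:ℕ) with hcc | hcc | hcc
        · rcases Nat.lt_or_ge (s:ℕ) b with hsblt | hsblt
          · omega
          · omega
        · exact absurd (Fin.ext hcc : s = t) (by intro he; subst he; omega)
        · -- t < s
          by_cases hsb' : (s:ℕ) < b
          · exact hc1 t s hcc hsb'
          · -- s ≥ b, s ≠ b so s = b+1
            have hs1 : (s:ℕ) = b + 1 := by have := s.isLt; omega
            have he : s = ⟨b+1, by omega⟩ := Fin.ext hs1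
            rw [he]
            exact hc3 t ht
      · have he : t = ⟨b, by omega⟩ := Fin.ext ht
        rw [he]
        exact hc2 s hsb
  · rintro ⟨hA, hG⟩
    refine ⟨?_, ?_, ?_⟩
    · rintro ⟨f, hf, hcond⟩
      have h1 : π (f 0) < π (f 1) := (hcond 0 1).2 (by decide)
      have h2 : π (f 0) < π (f 2) := (hcond 0 2).2 (by decide)
      exact hA (f 0) (f 1) (f 2) (hf (by decide)) (hf (by decide)) h1 h2
    · rintro ⟨f, hf, hcond⟩
      have h1 : π (f 0) < π (f 1) := (hcond 0 1).2 (by decide)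
      have h2 : π (f 0) < π (f 2) := (hcond 0 2).2 (by decide)
      exact hA (f 0) (f 1) (f 2) (hf (by decide)) (hf (by decide)) h1 h2
    · rintro ⟨f, hf, hcond⟩
      refine hG ⟨f, hf, ?_, ?_, ?_⟩
      · intro s t hst htb
        exact (hcond t s).2 ((hγlt t s).2 (Or.inl ⟨by omega, fun _ => hst, by omega⟩))
      · intro s hsb
        exact (hcond s ⟨b, by omega⟩).2 ((hγlt s ⟨b, by omega⟩).2 (Or.inr ⟨rfl, hsb⟩))
      · intro s hsb
        exact (hcond ⟨b+1, by omega⟩ s).2 ((hγlt ⟨b+1, by omega⟩ s).2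
          (Or.inl ⟨hsb, fun h => absurd h (by simp), by simp⟩))

lemma card_lt_val {n : ℕ} (π : Equiv.Perm (Fin n)) (v : Fin n) :
    (Finset.univ.filter fun j => π j < v).card = (v:ℕ) := by
  have h1 : (Finset.univ.filter fun j => π j < v) = (Finset.Iio v).image ⇑π.symm := by
    ext j
    simp only [Finset.mem_filter, Finset.mem_univ, true_and, Finset.mem_image, Finset.mem_Iio]
    constructor
    · intro h; exact ⟨π j, h, by simp⟩
    · rintro ⟨w, hw, rfl⟩; simpa using hw
  rw [h1, Finset.card_image_of_injective _ π.symm.injective, Fin.card_Iio]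

lemma claim_desc {n : ℕ} (π : Equiv.Perm (Fin n)) (hA : AvB π) {p : ℕ} (hp : p < n)
    (hmax : (π ⟨p, hp⟩ : ℕ) = n - 1) :
    ∀ i j : Fin n, (i:ℕ) < p → i < j → (j:ℕ) ≠ p → π j < π i := by
  intro i j hip hij hjp
  by_contra h
  have hne : π i ≠ π j := fun he => absurd (π.injective he) (by intro he2; subst he2; exact lt_irrefl _ hij)
  have h1 : π i < π j := lt_of_le_of_ne (not_lt.1 h) hne
  have hinp : (i:ℕ) ≠ p := by omega
  have hmaxlt : π i < π ⟨p, hp⟩ := by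
    rw [Fin.lt_def, hmax]
    have : π i ≠ π ⟨p, hp⟩ := fun he => hinp (congrArg Fin.val (π.injective he))
    have h2 : (π i : ℕ) < n := (π i).isLt
    have h3 : (π i : ℕ) ≠ n - 1 := fun he => this (Fin.ext (by rw [he, hmax]))
    omega
  rcases Nat.lt_or_ge (j:ℕ) p with hc | hc
  · exact hA i j ⟨p, hp⟩ hij (by rw [Fin.lt_def]; exact hc) h1 hmaxlt
  · have hc2 : p < (j:ℕ) := by omega
    exact hA i ⟨p, hp⟩ j (by rw [Fin.lt_def]; exact hip) (by rw [Fin.lt_def]; exact hc2) hmaxlt h1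

lemma prefix_forced {n : ℕ} (π : Equiv.Perm (Fin n)) (hA : AvB π) {p : ℕ} (hp : p < n)
    (hmax : (π ⟨p, hp⟩ : ℕ) = n - 1) :
    ∀ i : Fin n, (i:ℕ) < p → (π i : ℕ) = n - 2 - (i:ℕ) := by
  intro i hip
  have key : (Finset.univ.filter fun j => π j < π i) =
      (Finset.Ioi i).erase ⟨p, hp⟩ := by
    ext j
    simp only [Finset.mem_filter, Finset.mem_univ, true_and, Finset.mem_erase, Finset.mem_Ioi]
    constructor
    · intro h
      have hji : i < j := by
        rcases lt_trichotomy i j with hc | hc | hc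
        · exact hc
        · subst hc; exact absurd h (lt_irrefl _)
        · exact absurd (claim_desc π hA hp hmax j i (by omega) hc (by omega)) (by
            intro h2; exact absurd (h2.trans h) (lt_irrefl _))
      refine ⟨?_, hji⟩
      intro he
      subst he
      rw [Fin.lt_def, hmax] at h
      have := (π i).isLt
      omega
    · rintro ⟨hne, hij⟩
      exact claim_desc π hA hp hmax i j hip hij (fun he => hne (Fin.ext he))
  have h2 : ((Finset.Ioi i).erase ⟨p, hp⟩).card = n - 2 - (i:ℕ) := by
    rw [Finset.card_erase_of_mem (by rw [Finset.mem_Ioi, Fin.lt_def]; exact hip), Fin.card_Ioi]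
    omega
  rw [← card_lt_val π (π i), key, h2]

lemma tail_small {n : ℕ} (π : Equiv.Perm (Fin n)) (hA : AvB π) {p : ℕ} (hp : p < n)
    (hmax : (π ⟨p, hp⟩ : ℕ) = n - 1) :
    ∀ j : Fin n, p < (j:ℕ) → (π j : ℕ) < n - 1 - p := by
  intro j hpj
  by_contra h
  have h1 : n - 1 - p ≤ (π j : ℕ) := not_lt.1 h
  have hjlt : (π j : ℕ) < n := (π j).isLt
  rcases Nat.lt_or_ge (π j : ℕ) (n-1) with hc | hc
  · -- π j ≤ n - 2, set i = n - 2 - π j < p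
    have hi : n - 2 - (π j : ℕ) < p := by omega
    have hival : (π ⟨n - 2 - (π j : ℕ), by omega⟩ : ℕ) = (π j : ℕ) := by
      rw [prefix_forced π hA hp hmax _ hi]
      simp only []
      omega
    have : (⟨n - 2 - (π j : ℕ), by omega⟩ : Fin n) = j :=
      π.injective (Fin.ext hival)
    have := congrArg Fin.val this
    simp only [] at this
    omega
  · have hc2 : (π j : ℕ) = n - 1 := by omega
    have : j = ⟨p, hp⟩ := π.injective (Fin.ext (by rw [hc2, hmax]))
    have := congrArg Fin.val this
    simp only [] at this
    omega

def bpFun (n p : ℕ) (τ : Equiv.Perm (Fin (n - 1 - p))) : Fin n → Fin n := fun i =>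
  if h : (i:ℕ) < p then ⟨n - 2 - i, by omega⟩
  else if h2 : (i:ℕ) = p then ⟨n - 1, by have := i.isLt; omega⟩
  else ⟨(τ ⟨(i:ℕ) - (p+1), by have := i.isLt; omega⟩ : ℕ), by
    have := (τ ⟨(i:ℕ) - (p+1), by have := i.isLt; omega⟩).isLt; omega⟩

lemma bpFun_lt {n p : ℕ} (τ : Equiv.Perm (Fin (n - 1 - p))) (i : Fin n)
    (h : (i:ℕ) < p) : (bpFun n p τ i : ℕ) = n - 2 - (i:ℕ) := by
  unfold bpFun; rw [dif_pos h]

lemma bpFun_at {n p : ℕ} (τ : Equiv.Perm (Fin (n - 1 - p))) (i : Fin n)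
    (h : (i:ℕ) = p) : (bpFun n p τ i : ℕ) = n - 1 := by
  unfold bpFun; rw [dif_neg (by omega), dif_pos h]

lemma bpFun_gt {n p : ℕ} (τ : Equiv.Perm (Fin (n - 1 - p))) (i : Fin n)
    (h : p < (i:ℕ)) :
    (bpFun n p τ i : ℕ) = (τ ⟨(i:ℕ) - (p+1), by have := i.isLt; omega⟩ : ℕ) := by
  unfold bpFun; rw [dif_neg (by omega), dif_neg (by omega)]

lemma bpFun_inj (n p : ℕ) (hp : p < n) (τ : Equiv.Perm (Fin (n - 1 - p))) :
    Function.Injective (bpFun n p τ) := by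
  intro i j hij
  have hval : (bpFun n p τ i : ℕ) = (bpFun n p τ j : ℕ) := congrArg Fin.val hij
  have hi := i.isLt; have hj := j.isLt
  rcases lt_trichotomy (i:ℕ) p with hic | hic | hic <;>
    rcases lt_trichotomy (j:ℕ) p with hjc | hjc | hjc
  · rw [bpFun_lt τ i hic, bpFun_lt τ j hjc] at hval; exact Fin.ext (by omega)
  · rw [bpFun_lt τ i hic, bpFun_at τ j hjc] at hval; omega
  · rw [bpFun_lt τ i hic, bpFun_gt τ j hjc] at hval
    have := (τ ⟨(j:ℕ) - (p+1), by omega⟩).isLt; omega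
  · rw [bpFun_at τ i hic, bpFun_lt τ j hjc] at hval; omega
  · exact Fin.ext (by omega)
  · rw [bpFun_at τ i hic, bpFun_gt τ j hjc] at hval
    have := (τ ⟨(j:ℕ) - (p+1), by omega⟩).isLt; omega
  · rw [bpFun_gt τ i hic, bpFun_lt τ j hjc] at hval
    have := (τ ⟨(i:ℕ) - (p+1), by omega⟩).isLt; omega
  · rw [bpFun_gt τ i hic, bpFun_at τ j hjc] at hval
    have := (τ ⟨(i:ℕ) - (p+1), by omega⟩).isLt; omega
  · rw [bpFun_gt τ i hic, bpFun_gt τ j hjc] at hval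
    have h2 : τ ⟨(i:ℕ) - (p+1), by omega⟩ = τ ⟨(j:ℕ) - (p+1), by omega⟩ := Fin.ext hval
    have h3 := congrArg Fin.val (τ.injective h2)
    simp only [Fin.val_mk] at h3
    exact Fin.ext (by omega)

noncomputable def bp (n p : ℕ) (hp : p < n) (τ : Equiv.Perm (Fin (n - 1 - p))) :
    Equiv.Perm (Fin n) :=
  Equiv.ofBijective (bpFun n p τ) ((Finite.injective_iff_bijective).1 (bpFun_inj n p hp τ))

lemma bp_apply {n p : ℕ} (hp : p < n) (τ : Equiv.Perm (Fin (n - 1 - p))) (i : Fin n) :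
    bp n p hp τ i = bpFun n p τ i := rfl

lemma sm_le {k n : ℕ} {g : Fin k → Fin n} (hg : StrictMono g) : ∀ s : Fin k, (s:ℕ) ≤ (g s : ℕ) := by
  have : ∀ v : ℕ, ∀ s : Fin k, (s:ℕ) = v → v ≤ (g s : ℕ) := by
    intro v
    induction v with
    | zero => intro s _; exact Nat.zero_le _
    | succ v ih =>
      intro s hs
      have hv : v < k := by have := s.isLt; omega
      have h1 : (⟨v, hv⟩ : Fin k) < s := by rw [Fin.lt_def]; simp [hs]
      have h2 := hg h1
      rw [Fin.lt_def] at h2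
      have h3 := ih ⟨v, hv⟩ rfl
      omega
  exact fun s => this (s:ℕ) s rfl

section transfer
variable {b n p : ℕ} (hp : p < n) (τ : Equiv.Perm (Fin (n - 1 - p)))

lemma tau_isLt (j : Fin (n - 1 - p)) : ((τ j : ℕ)) < n - 1 - p := (τ j).isLt

lemma bp_avb (hτ : AvB τ) : AvB (bp n p hp τ) := by
  intro i j k hij hjk h1 h2
  rw [Fin.lt_def] at hij hjk h1 h2
  rw [bp_apply, bp_apply] at h1 h2
  have hi := i.isLt; have hj := j.isLt; have hk := k.isLt
  rcases lt_trichotomy (i:ℕ) p with hic | hic | hic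
  · -- i in prefix
    rcases lt_trichotomy (j:ℕ) p with hjc | hjc | hjc
    · rw [bpFun_lt τ i hic, bpFun_lt τ j hjc] at h1; omega
    · -- j = p, so k > p
      have hkc : p < (k:ℕ) := by omega
      rw [bpFun_lt τ i hic, bpFun_gt τ k hkc] at h2
      have := tau_isLt τ ⟨(k:ℕ) - (p+1), by omega⟩
      omega
    · rw [bpFun_lt τ i hic, bpFun_gt τ j hjc] at h1
      have := tau_isLt τ ⟨(j:ℕ) - (p+1), by omega⟩
      omega
  · -- i = p : value n-1, cannot be < anything
    rw [bpFun_at τ i hic] at h1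
    have := (bpFun n p τ j).isLt
    omega
  · -- i, j, k all in tail
    have hjc : p < (j:ℕ) := by omega
    have hkc : p < (k:ℕ) := by omega
    rw [bpFun_gt τ i hic, bpFun_gt τ j hjc] at h1
    rw [bpFun_gt τ i hic, bpFun_gt τ k hkc] at h2
    exact hτ ⟨(i:ℕ) - (p+1), by omega⟩ ⟨(j:ℕ) - (p+1), by omega⟩ ⟨(k:ℕ) - (p+1), by omega⟩
      (by rw [Fin.lt_def]; simp only [Fin.val_mk]; omega)
      (by rw [Fin.lt_def]; simp only [Fin.val_mk]; omega)
      (by rw [Fin.lt_def]; exact h1) (by rw [Fin.lt_def]; exact h2)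

lemma bp_contg (hb : 1 ≤ b) (hpb : p < b ∨ p = n - 1) (hτ : ¬ ContG b τ) :
    ¬ ContG b (bp n p hp τ) := by
  rintro ⟨g, hg, hc1, hc2, hc3⟩
  set B : Fin (b+2) := ⟨b, by omega⟩ with hB
  set B1 : Fin (b+2) := ⟨b+1, by omega⟩ with hB1
  have hq := (g B).isLt
  rcases lt_trichotomy ((g B : ℕ)) p with hqc | hqc | hqc
  · -- g B < p : contradiction via s = 0
    have h0B : (0 : Fin (b+2)) < B := by rw [Fin.lt_def]; simp [hB]; omega
    have hlt := hc2 0 (by simp; omega)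
    rw [Fin.lt_def, bp_apply, bp_apply] at hlt
    have hg0 : (g 0 : ℕ) < (g B : ℕ) := by
      have := hg h0B; rwa [Fin.lt_def] at this
    rw [bpFun_lt τ (g 0) (by omega), bpFun_lt τ (g B) hqc] at hlt
    omega
  · -- g B = p
    rcases hpb with hpb | hpb
    · -- p < b : pigeonhole via s = b-1
      have hbm : b - 1 < b + 2 := by omega
      have hlt : (⟨b-1, hbm⟩ : Fin (b+2)) < B := by rw [Fin.lt_def]; simp [hB]; omega
      have h1 := hg hlt
      rw [Fin.lt_def] at h1
      have h2 := sm_le hg ⟨b-1, hbm⟩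
      simp only [Fin.val_mk] at h2
      omega
    · -- p = n - 1 : g B1 > g B = p = n-1 impossible
      have h1 := hg (show B < B1 by rw [Fin.lt_def]; simp [hB, hB1])
      rw [Fin.lt_def] at h1
      have := (g B1).isLt
      omega
  · -- g B > p
    rcases lt_trichotomy ((g 0 : ℕ)) p with h0c | h0c | h0c
    · have hlt := hc2 0 (by simp; omega)
      rw [Fin.lt_def, bp_apply, bp_apply] at hlt
      rw [bpFun_lt τ (g 0) h0c, bpFun_gt τ (g B) hqc] at hlt
      have := tau_isLt τ ⟨(g B : ℕ) - (p+1), by omega⟩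
      omega
    · have hlt := hc2 0 (by simp; omega)
      rw [Fin.lt_def, bp_apply, bp_apply] at hlt
      rw [bpFun_at τ (g 0) h0c] at hlt
      have := (bpFun n p τ (g B)).isLt
      omega
    · -- all g s > p : transfer to τ
      have hall : ∀ s : Fin (b+2), p < (g s : ℕ) := by
        intro s
        have : g 0 ≤ g s := hg.monotone (Fin.zero_le s)
        have := Fin.le_def.1 this
        omega
      refine hτ ⟨fun s => ⟨(g s : ℕ) - (p+1), by have := (g s).isLt; omega⟩, ?_, ?_, ?_, ?_⟩
      · intro s t hst
        have := hg hst
        rw [Fin.lt_def] at this ⊢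
        simp only [Fin.val_mk]
        have hs := hall s; have ht := hall t
        omega
      · intro s t hst htb
        have hlt := hc1 s t hst htb
        rw [Fin.lt_def, bp_apply, bp_apply, bpFun_gt τ (g s) (hall s),
          bpFun_gt τ (g t) (hall t)] at hlt
        rw [Fin.lt_def]
        exact hlt
      · intro s hsb
        have hlt := hc2 s hsb
        rw [Fin.lt_def, bp_apply, bp_apply, bpFun_gt τ (g s) (hall s),
          bpFun_gt τ (g B) (hall B)] at hlt
        rw [Fin.lt_def]
        exact hlt
      · intro s hsb
        have hlt := hc3 s hsb
        rw [Fin.lt_def, bp_apply, bp_apply, bpFun_gt τ (g s) (hall s),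
          bpFun_gt τ (g B1) (hall B1)] at hlt
        rw [Fin.lt_def]
        exact hlt

end transfer

section extract
variable {b n p : ℕ}

/-- the tail of a Good permutation with max at p, as a permutation of Fin (n-1-p) -/
noncomputable def tp (π : Equiv.Perm (Fin n)) (hA : AvB π) (hp : p < n)
    (hmax : (π ⟨p, hp⟩ : ℕ) = n - 1) : Equiv.Perm (Fin (n - 1 - p)) :=
  Equiv.ofBijective
    (fun j => (⟨(π ⟨p + 1 + (j:ℕ), by have := j.isLt; omega⟩ : ℕ),
        tail_small π hA hp hmax _ (by simp only [Fin.val_mk]; omega)⟩ : Fin (n - 1 - p)))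
    ((Finite.injective_iff_bijective).1 (by
      intro x y hxy
      have h1 := congrArg Fin.val hxy
      simp only [Fin.val_mk] at h1
      have h2 := π.injective (Fin.ext h1)
      have h3 := congrArg Fin.val h2
      simp only [Fin.val_mk] at h3
      exact Fin.ext (by omega)))

lemma tp_apply (π : Equiv.Perm (Fin n)) (hA : AvB π) (hp : p < n)
    (hmax : (π ⟨p, hp⟩ : ℕ) = n - 1) (j : Fin (n - 1 - p)) :
    (tp π hA hp hmax j : ℕ) = (π ⟨p + 1 + (j:ℕ), by have := j.isLt; omega⟩ : ℕ) := rfl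

lemma bp_tp (π : Equiv.Perm (Fin n)) (hA : AvB π) (hp : p < n)
    (hmax : (π ⟨p, hp⟩ : ℕ) = n - 1) :
    bp n p hp (tp π hA hp hmax) = π := by
  apply Equiv.ext
  intro i
  apply Fin.ext
  rw [bp_apply]
  rcases lt_trichotomy (i:ℕ) p with hic | hic | hic
  · rw [bpFun_lt _ i hic, prefix_forced π hA hp hmax i hic]
  · rw [bpFun_at _ i hic]
    have : i = ⟨p, hp⟩ := Fin.ext hic
    rw [this, hmax]
  · rw [bpFun_gt _ i hic, tp_apply]
    congr 1
    apply congrArg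
    apply Fin.ext
    simp only [Fin.val_mk]
    have := i.isLt
    omega

lemma tp_good (π : Equiv.Perm (Fin n)) (hG : Good b π) (hp : p < n)
    (hmax : (π ⟨p, hp⟩ : ℕ) = n - 1) : Good b (tp π hG.1 hp hmax) := by
  obtain ⟨hA, hC⟩ := hG
  constructor
  · intro i j k hij hjk h1 h2
    rw [Fin.lt_def] at hij hjk h1 h2
    rw [tp_apply, tp_apply] at h1 h2
    exact hA ⟨p + 1 + (i:ℕ), by have := i.isLt; omega⟩
      ⟨p + 1 + (j:ℕ), by have := j.isLt; omega⟩
      ⟨p + 1 + (k:ℕ), by have := k.isLt; omega⟩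
      (by rw [Fin.lt_def]; simp only [Fin.val_mk]; omega)
      (by rw [Fin.lt_def]; simp only [Fin.val_mk]; omega)
      (by rw [Fin.lt_def]; exact h1) (by rw [Fin.lt_def]; exact h2)
  · rintro ⟨g, hg, hc1, hc2, hc3⟩
    refine hC ⟨fun s => ⟨p + 1 + (g s : ℕ), by have := (g s).isLt; omega⟩, ?_, ?_, ?_, ?_⟩
    · intro s t hst
      have := hg hst
      rw [Fin.lt_def] at this ⊢
      simp only [Fin.val_mk]
      omega
    · intro s t hst htb
      have hlt := hc1 s t hst htb
      rw [Fin.lt_def, tp_apply, tp_apply] at hlt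
      rw [Fin.lt_def]
      exact hlt
    · intro s hsb
      have hlt := hc2 s hsb
      rw [Fin.lt_def, tp_apply, tp_apply] at hlt
      rw [Fin.lt_def]
      exact hlt
    · intro s hsb
      have hlt := hc3 s hsb
      rw [Fin.lt_def, tp_apply, tp_apply] at hlt
      rw [Fin.lt_def]
      exact hlt

lemma pos_lt (hb : 1 ≤ b) (π : Equiv.Perm (Fin n)) (hG : Good b π) (hp : p < n)
    (hmax : (π ⟨p, hp⟩ : ℕ) = n - 1) (hpn : p + 1 < n) : p < b := by
  obtain ⟨hA, hC⟩ := hG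
  by_contra hcon
  have hbp : b ≤ p := not_lt.1 hcon
  refine hC ⟨fun s => if h : (s:ℕ) < b then ⟨p - b + (s:ℕ), by omega⟩
    else if h2 : (s:ℕ) = b then ⟨p, hp⟩ else ⟨p + 1, hpn⟩, ?_, ?_, ?_, ?_⟩
  · intro s t hst
    rw [Fin.lt_def] at hst
    rw [Fin.lt_def]
    have hs2 := s.isLt; have ht2 := t.isLt
    dsimp only
    by_cases h1 : (s:ℕ) < b <;> by_cases h2 : (t:ℕ) < b
    · rw [dif_pos h1, dif_pos h2]; simp only [Fin.val_mk]; omega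
    · rw [dif_pos h1]
      by_cases h3 : (t:ℕ) = b
      · rw [dif_neg h2, dif_pos h3]; simp only [Fin.val_mk]; omega
      · rw [dif_neg h2, dif_neg h3]; simp only [Fin.val_mk]; omega
    · omega
    · by_cases h3 : (s:ℕ) = b <;> by_cases h4 : (t:ℕ) = b
      · omega
      · rw [dif_neg h1, dif_pos h3, dif_neg h2, dif_neg h4]; simp only [Fin.val_mk]; omega
      · omega
      · omega
  · intro s t hst htb
    dsimp only
    rw [dif_pos (show (s:ℕ) < b by omega), dif_pos htb, Fin.lt_def,
      prefix_forced π hA hp hmax ⟨p - b + (t:ℕ), by omega⟩ (by simp only [Fin.val_mk]; omega),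
      prefix_forced π hA hp hmax ⟨p - b + (s:ℕ), by omega⟩ (by simp only [Fin.val_mk]; omega)]
    simp only [Fin.val_mk]
    omega
  · intro s hsb
    dsimp only
    rw [dif_neg (show ¬ ((⟨b, by omega⟩ : Fin (b+2)) : ℕ) < b by simp), dif_pos rfl]
    rw [Fin.lt_def, hmax]
    by_cases h1 : (s:ℕ) < b
    · rw [dif_pos h1, prefix_forced π hA hp hmax ⟨p - b + (s:ℕ), by omega⟩
        (by simp only [Fin.val_mk]; omega)]
      simp only [Fin.val_mk]
      omega
    · have hs2 := s.isLt
      have h2 : (s:ℕ) = b + 1 := by omega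
      rw [dif_neg h1, dif_neg (by omega)]
      have := tail_small π hA hp hmax ⟨p+1, hpn⟩ (by simp only [Fin.val_mk]; omega)
      omega
  · intro s hsb
    dsimp only
    rw [dif_neg (show ¬ ((⟨b+1, by omega⟩ : Fin (b+2)) : ℕ) < b by simp), 
      dif_neg (by simp), dif_pos hsb, Fin.lt_def,
      prefix_forced π hA hp hmax ⟨p - b + (s:ℕ), by omega⟩ (by simp only [Fin.val_mk]; omega)]
    have := tail_small π hA hp hmax ⟨p+1, hpn⟩ (by simp only [Fin.val_mk]; omega)
    simp only [Fin.val_mk]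
    omega

end extract

noncomputable def NG (b n : ℕ) : ℕ := Nat.card {π : Equiv.Perm (Fin n) // Good b π}

lemma NG_zero (b : ℕ) : NG b 0 = 1 := by
  unfold NG
  have he : {π : Equiv.Perm (Fin 0) // Good b π} ≃ Equiv.Perm (Fin 0) :=
    Equiv.subtypeUnivEquiv (by
      intro π
      constructor
      · intro i; exact i.elim0
      · rintro ⟨g, -, -, -, -⟩; exact (g 0).elim0)
  rw [Nat.card_congr he, Nat.card_eq_fintype_card]
  simp

lemma nat_card_sigma_fin {k : ℕ} (f : Fin k → Type*) [inst : ∀ q, Finite (f q)] :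
    Nat.card (Σ q, f q) = ∑ q, Nat.card (f q) := by
  classical
  letI : ∀ q, Fintype (f q) := fun q => Fintype.ofFinite _
  rw [Nat.card_eq_fintype_card, Fintype.card_sigma]
  exact Finset.sum_congr rfl (fun q _ => (Nat.card_eq_fintype_card).symm)

lemma fiber_card (b n : ℕ) (hb : 1 ≤ b) (hn : 1 ≤ n) (q : Fin n)
    (hq : (q:ℕ) < b ∨ (q:ℕ) = n - 1) :
    Nat.card {π : Equiv.Perm (Fin n) // Good b π ∧ π q = ⟨n-1, by omega⟩}
      = NG b (n - 1 - (q:ℕ)) := by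
  unfold NG
  symm
  have hBij : Function.Bijective (fun τ : {τ' : Equiv.Perm (Fin (n - 1 - (q:ℕ))) // Good b τ'} =>
      (⟨bp n (q:ℕ) q.isLt τ.1,
        ⟨⟨bp_avb q.isLt τ.1 τ.2.1, bp_contg q.isLt τ.1 hb hq τ.2.2⟩, by
          apply Fin.ext
          rw [bp_apply]
          exact bpFun_at τ.1 q (by simp [Fin.eta])⟩⟩ :
        {π : Equiv.Perm (Fin n) // Good b π ∧ π q = ⟨n-1, by omega⟩})) := by
    constructor
    · intro τ τ' h
      have h2 : bp n (q:ℕ) q.isLt τ.1 = bp n (q:ℕ) q.isLt τ'.1 := congrArg Subtype.val h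
      apply Subtype.ext
      apply Equiv.ext
      intro j
      apply Fin.ext
      have harg : ∀ (σ : Equiv.Perm (Fin (n - 1 - (q:ℕ)))),
          (σ ⟨(q:ℕ) + 1 + (j:ℕ) - ((q:ℕ)+1), by have := j.isLt; omega⟩ : ℕ) = (σ j : ℕ) := by
        intro σ; congr 1; apply congrArg; apply Fin.ext; simp only [Fin.val_mk]; omega
      have key : ∀ (σ : Equiv.Perm (Fin (n - 1 - (q:ℕ)))),
          (bp n (q:ℕ) q.isLt σ ⟨(q:ℕ) + 1 + (j:ℕ), by have := j.isLt; omega⟩ : ℕ)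
            = (σ j : ℕ) := by
        intro σ
        rw [bp_apply, bpFun_gt σ _ (by simp only [Fin.val_mk]; omega)]
        exact harg σ
      rw [← key τ.1, ← key τ'.1, h2]
    · rintro ⟨π, hGood, hmaxeq⟩
      have hmax : (π ⟨(q:ℕ), q.isLt⟩ : ℕ) = n - 1 := by
        rw [show (⟨(q:ℕ), q.isLt⟩ : Fin n) = q from Fin.ext rfl, hmaxeq]
      refine ⟨⟨tp π hGood.1 q.isLt hmax, tp_good π hGood q.isLt hmax⟩, ?_⟩
      apply Subtype.ext
      exact bp_tp π hGood.1 q.isLt hmax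
  exact Nat.card_eq_of_bijective _ hBij

lemma fiber_empty (b n : ℕ) (hb : 1 ≤ b) (hn : 1 ≤ n) (q : Fin n)
    (hq : ¬ ((q:ℕ) < b ∨ (q:ℕ) = n - 1)) :
    Nat.card {π : Equiv.Perm (Fin n) // Good b π ∧ π q = ⟨n-1, by omega⟩} = 0 := by
  push_neg at hq
  have : IsEmpty {π : Equiv.Perm (Fin n) // Good b π ∧ π q = ⟨n-1, by omega⟩} := by
    constructor
    rintro ⟨π, hGood, hmaxeq⟩
    have hmax : (π ⟨(q:ℕ), q.isLt⟩ : ℕ) = n - 1 := by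
      rw [show (⟨(q:ℕ), q.isLt⟩ : Fin n) = q from Fin.ext rfl, hmaxeq]
    have := pos_lt hb π hGood q.isLt hmax (by have := q.isLt; omega)
    omega
  exact Nat.card_of_isEmpty

lemma NG_rec (b n : ℕ) (hb : 1 ≤ b) (hn : 1 ≤ n) :
    NG b n = ∑ i ∈ Finset.range n,
      (if i < b ∨ i = n - 1 then NG b (n - 1 - i) else 0) := by
  have hn' : n - 1 < n := by omega
  have e1 : ∀ q : Fin n,
      {x : {π : Equiv.Perm (Fin n) // Good b π} // x.1.symm ⟨n-1, hn'⟩ = q}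
        ≃ {π : Equiv.Perm (Fin n) // Good b π ∧ π q = ⟨n-1, hn'⟩} := fun q =>
    (Equiv.subtypeSubtypeEquivSubtypeInter (Good b)
      (fun π => π.symm ⟨n-1, hn'⟩ = q)).trans
    (Equiv.subtypeEquivRight (fun π => by
      constructor
      · rintro ⟨h1, h2⟩
        exact ⟨h1, by rw [← h2, Equiv.apply_symm_apply]⟩
      · rintro ⟨h1, h2⟩
        exact ⟨h1, by rw [Equiv.symm_apply_eq, h2]⟩))
  have key : NG b n = ∑ q : Fin n,
      Nat.card {π : Equiv.Perm (Fin n) // Good b π ∧ π q = ⟨n-1, hn'⟩} := by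
    unfold NG
    rw [← nat_card_sigma_fin (fun q : Fin n =>
      {π : Equiv.Perm (Fin n) // Good b π ∧ π q = ⟨n-1, hn'⟩})]
    apply Nat.card_congr
    exact ((Equiv.sigmaFiberEquiv
      (fun x : {π : Equiv.Perm (Fin n) // Good b π} => x.1.symm ⟨n-1, hn'⟩)).symm.trans
      (Equiv.sigmaCongrRight e1))
  rw [key, ← Fin.sum_univ_eq_sum_range
    (fun i => (if i < b ∨ i = n - 1 then NG b (n - 1 - i) else 0))]
  apply Finset.sum_congr rfl
  intro q _
  by_cases hq : (q:ℕ) < b ∨ (q:ℕ) = n - 1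
  · rw [fiber_card b n hb hn q hq, if_pos hq]
  · rw [fiber_empty b n hb hn q hq, if_neg hq]

def Hsum (b t : ℕ) : ℕ := ∑ k ∈ Finset.Icc 1 t, genFib b k

lemma genFib_one (b : ℕ) : genFib b 1 = 1 := by simp [genFib]

lemma genFib_succ_succ (b m : ℕ) :
    genFib b (m + 2) = ∑ i ∈ Finset.range b, genFib b (m + 1 - i) := by
  rw [genFib]

lemma Hsum_zero (b : ℕ) : Hsum b 0 = 0 := by simp [Hsum]

lemma Hsum_succ (b t : ℕ) : Hsum b (t+1) = Hsum b t + genFib b (t+1) := by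
  unfold Hsum
  rw [← Finset.sum_Icc_succ_top (by omega : 1 ≤ t + 1)]

lemma Hsum_rec (b : ℕ) : ∀ m : ℕ, Hsum b (m+1) = 1 + ∑ i ∈ Finset.range b, Hsum b (m - i) := by
  intro m
  induction m with
  | zero =>
    rw [Hsum_succ, Hsum_zero, genFib_one]
    have : ∀ i ∈ Finset.range b, Hsum b (0 - i) = 0 := by
      intro i _
      have : (0:ℕ) - i = 0 := by omega
      rw [this, Hsum_zero]
    rw [Finset.sum_congr rfl this]
    simp
  | succ m ih =>
    rw [Hsum_succ, ih, genFib_succ_succ, add_assoc, ← Finset.sum_add_distrib]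
    congr 1
    apply Finset.sum_congr rfl
    intro i _
    rcases le_or_gt i m with hc | hc
    · rw [show m + 1 - i = (m - i) + 1 by omega, Hsum_succ]
    · rw [show m - i = 0 by omega, show m + 1 - i = 0 by omega, Hsum_zero]
      simp [genFib]

lemma sum_range_ite_eq (a c : ℕ) (f : ℕ → ℕ) :
    ∑ i ∈ Finset.range a, (if i < c then f i else 0) = ∑ i ∈ Finset.range (min a c), f i := by
  rw [← Finset.sum_filter]
  congr 1
  ext i
  simp only [Finset.mem_filter, Finset.mem_range, lt_min_iff]

lemma NG_eq_Hsum (b : ℕ) (hb : 1 ≤ b) : ∀ n, 1 ≤ n → NG b n = Hsum b n := by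
  intro n
  induction n using Nat.strong_induction_on with
  | _ n ih =>
    intro hn
    obtain ⟨m, rfl⟩ : ∃ m, n = m + 1 := ⟨n - 1, by omega⟩
    rw [NG_rec b (m+1) hb (by omega)]
    simp only [Nat.add_sub_cancel]
    rw [Finset.sum_range_succ, if_pos (Or.inr rfl), Nat.sub_self, NG_zero]
    have step1 : ∀ i ∈ Finset.range m,
        (if i < b ∨ i = m then NG b (m - i) else 0) = (if i < b then Hsum b (m - i) else 0) := by
      intro i hi
      rw [Finset.mem_range] at hi
      by_cases hc : i < b
      · rw [if_pos (Or.inl hc), if_pos hc, ih (m - i) (by omega) (by omega)]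
      · rw [if_neg (by omega), if_neg hc]
    rw [Finset.sum_congr rfl step1, sum_range_ite_eq m b (fun i => Hsum b (m - i)),
      Hsum_rec b m]
    have : ∑ i ∈ Finset.range b, Hsum b (m - i) = ∑ i ∈ Finset.range (min m b), Hsum b (m - i) := by
      rw [Nat.min_comm]
      symm
      apply Finset.sum_subset
      · intro x hx
        rw [Finset.mem_range] at hx ⊢
        omega
      · intro x hx1 hx2
        rw [Finset.mem_range] at hx1 hx2
        rw [show m - x = 0 by omega, Hsum_zero]
    rw [this]
    omega

/-- Let `γ = γ_{0,b,1}` be the permutation of `{1,…,b+2}` with one-line notation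
`b+1, b, …, 3, 2, b+2, 1` (zero-indexed: `γ i = b - i` for `i < b`, `γ b = b + 1`,
and `γ (b+1) = 0`).  Then for `n ≥ 1`,
`|S_n(132, 123, γ_{0,b,1})| = ∑_{k=1}^{n} F_{b,k}`. -/
theorem statement6 (b n : ℕ) (hb : 1 ≤ b) (hn : 1 ≤ n)
    (γ : Equiv.Perm (Fin (b + 2)))
    (hγ : ∀ i : Fin (b + 2),
      (γ i : ℕ) = if (i : ℕ) < b then b - (i : ℕ) else if (i : ℕ) = b then b + 1 else 0) :
    Nat.card {π : Equiv.Perm (Fin n) //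
        PAvoids π p132 ∧ PAvoids π p123 ∧ PAvoids π γ} =
      ∑ k ∈ Finset.Icc 1 n, genFib b k     := by
  have he : {π : Equiv.Perm (Fin n) // PAvoids π p132 ∧ PAvoids π p123 ∧ PAvoids π γ}
      ≃ {π : Equiv.Perm (Fin n) // Good b π} :=
    Equiv.subtypeEquivRight (fun π => avoid_iff b hb γ hγ π)
  have h1 : Nat.card {π : Equiv.Perm (Fin n) //
      PAvoids π p132 ∧ PAvoids π p123 ∧ PAvoids π γ} = NG b n := Nat.card_congr he
  rw [h1, NG_eq_Hsum b hb n hn]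
  rfl
end
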